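/- arXiv:2507.05793 — 2 statements merged into one kernel-verified Lean document; each statement's English description precedes it below -/
import Mathlib

section
/- In a recurrent network, the dipole from o to y is unique: if f is a nonnegative function with f(o)=0 and Δf = 1_o − 1_y, then f equals the Green density g_o(·,y). -/
open scoped Classical
open Filter Topology MeasureTheory ProbabilityTheory

/-- A weighted network: an infinite, connected, locally finite graph with
positive edge conductances, encoded by a symmetric conductance function. -/
structure Network (V : Type*) where
  c : V → V → ℝ
  symm : ∀ x y, c x y = c y x
  nonneg : ∀ x y, 0 ≤ c x y
  locFin : ∀ x, {y | 0 < c x y}.Finite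
  conn : ∀ x y, Relation.ReflTransGen (fun a b => 0 < c a b) x y
  deg_pos : ∀ x, 0 < ∑' y, c x y
  infinite : Infinite V

namespace Network

variable {V : Type*} (N : Network V)

/-- Total conductance at a vertex. -/
noncomputable def cTot (x : V) : ℝ := ∑' y, N.c x y

/-- One-step transition probabilities of the network random walk. -/
noncomputable def p (x y : V) : ℝ := N.c x y / N.cTot x

/-- `n`-step transition probabilities of the network random walk. -/
noncomputable def pstep : ℕ → V → V → ℝ
  | 0, x, y => if x = y then 1 else 0
  | n + 1, x, y => ∑' z, pstep n x z * N.p z y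

/-- The network random walk is recurrent: the expected number of returns is infinite. -/
def Recurrent : Prop := ∀ x : V, ¬ Summable (fun n => N.pstep n x x)

/-- `avoid A n x y` is the probability that the walk started at `x` is at `y` at time `n`
without having visited the set `A` at any time `0,…,n`, i.e. `P_x(X_n = y, τ_A > n)`. -/
noncomputable def avoid (A : Set V) : ℕ → V → V → ℝ
  | 0, x, y => if x = y ∧ x ∉ A then 1 else 0
  | n + 1, x, y => if y ∈ A then 0 else ∑' z, avoid A n x z * N.p z y

/-- Green kernel of the walk killed at `o`:  `G_o(x,y) = Σ_n P_x(X_n = y, τ_o > n)`. -/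
noncomputable def GreenK (o x y : V) : ℝ := ∑' n, N.avoid {o} n x y

/-- Green density of the walk killed at `o`:  `g_o(x,y) = G_o(x,y)/c_y`. -/
noncomputable def g (o x y : V) : ℝ := N.GreenK o x y / N.cTot y

/-- The network Laplacian `Δf(v) = Σ_x c_{vx}(f(x) − f(v))`. -/
noncomputable def lap (f : V → ℝ) (v : V) : ℝ := ∑' x, N.c v x * (f x - f v)

/-- A potential on the rooted network `(G,c,o)`: a nonnegative function vanishing at `o`,
with Laplacian `1` at `o` and harmonic elsewhere. -/
def IsPotential (o : V) (h : V → ℝ) : Prop :=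
  (∀ v, 0 ≤ h v) ∧ h o = 0 ∧ N.lap h o = 1 ∧ ∀ v, v ≠ o → N.lap h v = 0

/-- Harmonic measure from `v` on a set `A`:  `ω_v^A(z) = P_v(X_{τ_A} = z)`. -/
noncomputable def harm (A : Set V) (v z : V) : ℝ :=
  if v ∈ A then (if v = z then 1 else 0)
  else if z ∈ A then ∑' n, ∑' w, N.avoid A n v w * N.p w z
  else 0

/-- Effective resistance `R_eff(x ↔ y) = g_x(y,y)`. -/
noncomputable def Reff (x y : V) : ℝ := N.g x y y

/-- Transition probabilities of the Doob `h`-transform: `p^h(x,y) = p(x,y) h(y)/h(x)`. -/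
noncomputable def ph (h : V → ℝ) (x y : V) : ℝ := N.p x y * h y / h x

/-- `n`-step transition probabilities of the `h`-process. -/
noncomputable def phstep (h : V → ℝ) : ℕ → V → V → ℝ
  | 0, x, y => if x = y then 1 else 0
  | n + 1, x, y => ∑' z, phstep h n x z * N.ph h z y

/-- The initial distribution `μ_h(v) = c_{ov} h(v)`. -/
noncomputable def muh (o : V) (h : V → ℝ) (v : V) : ℝ := N.c o v * h v

end Network

/-- `P` is the law of the Markov chain with initial distribution `μ` and transition
probabilities `q`, as a measure on trajectory space. -/
def IsChainLaw {S : Type*} [MeasurableSpace S] (μ : S → ℝ) (q : S → S → ℝ)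
    (P : MeasureTheory.Measure (ℕ → S)) : Prop :=
  ∀ (n : ℕ) (v : ℕ → S),
    P {ω | ∀ i ≤ n, ω i = v i} =
      ENNReal.ofReal (μ (v 0) * ∏ i ∈ Finset.range n, q (v i) (v (i + 1)))

section DipoleAux

namespace Network

variable {V : Type*} (N : Network V)

lemma c_eq_zero {v x : V} (h : x ∉ (N.locFin v).toFinset) : N.c v x = 0 := by
  rw [Set.Finite.mem_toFinset, Set.mem_setOf_eq] at h
  exact le_antisymm (not_lt.mp h) (N.nonneg v x)

lemma c_summable (v : V) : Summable (N.c v) :=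
  summable_of_ne_finset_zero (s := (N.locFin v).toFinset) (fun _ hx => N.c_eq_zero hx)

lemma cTot_pos (v : V) : 0 < N.cTot v := N.deg_pos v

lemma p_nonneg (v x : V) : 0 ≤ N.p v x := div_nonneg (N.nonneg v x) (N.cTot_pos v).le

lemma p_eq_zero {v x : V} (h : x ∉ (N.locFin v).toFinset) : N.p v x = 0 := by
  rw [Network.p, N.c_eq_zero h, zero_div]

lemma p_summable (v : V) : Summable (N.p v) := (N.c_summable v).div_const _

lemma p_tsum (v : V) : ∑' x, N.p v x = 1 := by
  simp only [Network.p, div_eq_mul_inv]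
  rw [tsum_mul_right]
  exact mul_inv_cancel₀ (N.cTot_pos v).ne'

lemma p_pos {v x : V} (h : 0 < N.c v x) : 0 < N.p v x :=
  div_pos h (N.cTot_pos v)

/-- generic Fubini for finitely supported double sums -/
lemma tsum_comm_fin {f : V → V → ℝ} (s t : Finset V)
    (hs : ∀ z ∉ s, ∀ x, f z x = 0) (ht : ∀ x ∉ t, ∀ z, f z x = 0) :
    ∑' z, ∑' x, f z x = ∑' x, ∑' z, f z x := by
  have h1 : ∀ z, ∑' x, f z x = ∑ x ∈ t, f z x := fun z => tsum_eq_sum (fun x hx => ht x hx z)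
  have h2 : ∀ x, ∑' z, f z x = ∑ z ∈ s, f z x := fun x => tsum_eq_sum (fun z hz => hs z hz x)
  simp_rw [h1, h2]
  rw [tsum_eq_sum (s := s) (fun z hz => Finset.sum_eq_zero fun x _ => hs z hz x),
    tsum_eq_sum (s := t) (fun x hx => Finset.sum_eq_zero fun z _ => ht x hx z)]
  exact Finset.sum_comm

/-- support sets for `n`-step walks -/
noncomputable def aSupp : ℕ → V → Finset V
  | 0, v => {v}
  | n + 1, v => (aSupp n v).biUnion (fun z => (N.locFin z).toFinset)

lemma avoid_zero' (A : Set V) (x y : V) :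
    N.avoid A 0 x y = if x = y ∧ x ∉ A then 1 else 0 := rfl

lemma avoid_succ' (A : Set V) (n : ℕ) (x y : V) :
    N.avoid A (n + 1) x y = if y ∈ A then 0 else ∑' z, N.avoid A n x z * N.p z y := rfl

lemma avoid_nonneg (A : Set V) : ∀ (n : ℕ) (x y : V), 0 ≤ N.avoid A n x y
  | 0, x, y => by rw [avoid_zero']; split <;> norm_num
  | n + 1, x, y => by
    rw [avoid_succ']; split
    · exact le_refl 0
    · exact tsum_nonneg fun z => mul_nonneg (avoid_nonneg A n x z) (N.p_nonneg z y)

lemma avoid_supp (A : Set V) : ∀ (n : ℕ) (v : V), ∀ x ∉ N.aSupp n v, N.avoid A n v x = 0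
  | 0, v, x, hx => by
    rw [avoid_zero', if_neg]
    rintro ⟨rfl, -⟩
    exact hx (by simp [aSupp])
  | n + 1, v, x, hx => by
    rw [avoid_succ']
    split
    · rfl
    · refine (tsum_congr fun z => ?_).trans tsum_zero
      by_cases hz : z ∈ N.aSupp n v
      · rw [N.p_eq_zero, mul_zero]
        intro hmem
        exact hx (by rw [aSupp]; exact Finset.mem_biUnion.mpr ⟨z, hz, hmem⟩)
      · rw [avoid_supp A n v z hz, zero_mul]

lemma avoid_summable (A : Set V) (n : ℕ) (v : V) : Summable (N.avoid A n v) :=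
  summable_of_ne_finset_zero (s := N.aSupp n v) (N.avoid_supp A n v)

lemma avoid_from (A : Set V) : ∀ (n : ℕ) (x y : V), x ∈ A → N.avoid A n x y = 0
  | 0, x, y, hx => by rw [avoid_zero', if_neg]; rintro ⟨-, h⟩; exact h hx
  | n + 1, x, y, hx => by
    rw [avoid_succ']
    split
    · rfl
    · refine (tsum_congr fun z => ?_).trans tsum_zero
      rw [avoid_from A n x z hx, zero_mul]

lemma avoid_to (A : Set V) : ∀ (n : ℕ) (x y : V), y ∈ A → N.avoid A n x y = 0
  | 0, x, y, hyA => by rw [avoid_zero', if_neg]; rintro ⟨rfl, h⟩; exact h hyA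
  | n + 1, x, y, hyA => by rw [avoid_succ', if_pos hyA]

end Network

end DipoleAux
section DipoleAux2

namespace Network

variable {V : Type*} (N : Network V)

lemma pstep_zero' (x y : V) : N.pstep 0 x y = if x = y then 1 else 0 := rfl

lemma pstep_succ' (n : ℕ) (x y : V) :
    N.pstep (n + 1) x y = ∑' z, N.pstep n x z * N.p z y := rfl

lemma pstep_nonneg : ∀ (n : ℕ) (x y : V), 0 ≤ N.pstep n x y
  | 0, x, y => by rw [pstep_zero']; split <;> norm_num
  | n + 1, x, y => by
    rw [pstep_succ']
    exact tsum_nonneg fun z => mul_nonneg (pstep_nonneg n x z) (N.p_nonneg z y)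

lemma pstep_supp : ∀ (n : ℕ) (v : V), ∀ x ∉ N.aSupp n v, N.pstep n v x = 0
  | 0, v, x, hx => by
    rw [pstep_zero', if_neg]
    rintro rfl
    exact hx (by simp [aSupp])
  | n + 1, v, x, hx => by
    rw [pstep_succ']
    refine (tsum_congr fun z => ?_).trans tsum_zero
    by_cases hz : z ∈ N.aSupp n v
    · rw [N.p_eq_zero, mul_zero]
      intro hmem
      exact hx (by rw [aSupp]; exact Finset.mem_biUnion.mpr ⟨z, hz, hmem⟩)
    · rw [pstep_supp n v z hz, zero_mul]

lemma pstep_summable (n : ℕ) (v : V) : Summable (N.pstep n v) :=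
  summable_of_ne_finset_zero (s := N.aSupp n v) (N.pstep_supp n v)

lemma pstep_fs : ∀ (n : ℕ) (v x : V), N.pstep (n + 1) v x = ∑' z, N.p v z * N.pstep n z x
  | 0, v, x => by
    rw [pstep_succ']
    have h1 : ∀ z, N.pstep 0 v z * N.p z x = if z = v then N.p v x else 0 := by
      intro z
      rw [pstep_zero']
      by_cases h : z = v
      · subst h; rw [if_pos rfl, if_pos rfl, one_mul]
      · rw [if_neg (fun h' => h h'.symm), if_neg h, zero_mul]
    have h2 : ∀ z, N.p v z * N.pstep 0 z x = if z = x then N.p v x else 0 := by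
      intro z
      rw [pstep_zero']
      by_cases h : z = x
      · subst h; rw [if_pos rfl, if_pos rfl, mul_one]
      · rw [if_neg h, if_neg h, mul_zero]
    rw [tsum_congr h1, tsum_ite_eq, tsum_congr h2, tsum_ite_eq]
  | n + 1, v, x => by
    rw [pstep_succ']
    have h1 : ∑' z, N.pstep (n + 1) v z * N.p z x
        = ∑' z, ∑' w, N.p v w * N.pstep n w z * N.p z x := by
      refine tsum_congr fun z => ?_
      rw [pstep_fs n v z, ← tsum_mul_right]
    rw [h1, Network.tsum_comm_fin (((N.locFin v).toFinset).biUnion (fun w => N.aSupp n w))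
      ((N.locFin v).toFinset) ?_ ?_]
    · refine tsum_congr fun w => ?_
      rw [pstep_succ', ← tsum_mul_left]
      exact tsum_congr fun z => mul_assoc _ _ _
    · intro z hz w
      by_cases hw : w ∈ (N.locFin v).toFinset
      · have : z ∉ N.aSupp n w := fun hmem => hz (Finset.mem_biUnion.mpr ⟨w, hw, hmem⟩)
        rw [N.pstep_supp n w z this, mul_zero, zero_mul]
      · rw [N.p_eq_zero hw, zero_mul, zero_mul]
    · intro w hw z
      rw [N.p_eq_zero hw, zero_mul, zero_mul]

lemma avoid_fs (A : Set V) : ∀ (n : ℕ) (v x : V), v ∉ A →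
    N.avoid A (n + 1) v x = ∑' z, N.p v z * N.avoid A n z x
  | 0, v, x, hv => by
    rw [avoid_succ']
    have h1 : ∀ z, N.avoid A 0 v z * N.p z x = if z = v then N.p v x else 0 := by
      intro z
      rw [avoid_zero']
      by_cases h : z = v
      · subst h; rw [if_pos ⟨rfl, hv⟩, if_pos rfl, one_mul]
      · rw [if_neg (fun h' => h h'.1.symm), if_neg h, zero_mul]
    have h2 : ∀ z, N.p v z * N.avoid A 0 z x
        = if z = x then (if x ∈ A then 0 else N.p v x) else 0 := by
      intro z
      rw [avoid_zero']
      by_cases h : z = x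
      · subst h
        by_cases hxA : z ∈ A
        · rw [if_neg (fun hc => hc.2 hxA), if_pos rfl, if_pos hxA, mul_zero]
        · rw [if_pos ⟨rfl, hxA⟩, if_pos rfl, if_neg hxA, mul_one]
      · rw [if_neg (fun hc => h hc.1), if_neg h, mul_zero]
    rw [tsum_congr h2, tsum_ite_eq]
    by_cases hxA : x ∈ A
    · rw [if_pos hxA, if_pos hxA]
    · rw [if_neg hxA, if_neg hxA, tsum_congr h1, tsum_ite_eq]
  | n + 1, v, x, hv => by
    rw [avoid_succ']
    by_cases hx : x ∈ A
    · rw [if_pos hx]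
      symm
      refine (tsum_congr fun w => ?_).trans tsum_zero
      rw [N.avoid_to A (n + 1) w x hx, mul_zero]
    · rw [if_neg hx]
      have h1 : ∑' z, N.avoid A (n + 1) v z * N.p z x
          = ∑' z, ∑' w, N.p v w * N.avoid A n w z * N.p z x := by
        refine tsum_congr fun z => ?_
        rw [avoid_fs A n v z hv, ← tsum_mul_right]
      rw [h1, Network.tsum_comm_fin (((N.locFin v).toFinset).biUnion (fun w => N.aSupp n w))
        ((N.locFin v).toFinset) ?_ ?_]
      · refine tsum_congr fun w => ?_
        rw [avoid_succ', if_neg hx, ← tsum_mul_left]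
        exact tsum_congr fun z => mul_assoc _ _ _
      · intro z hz w
        by_cases hw : w ∈ (N.locFin v).toFinset
        · have : z ∉ N.aSupp n w := fun hmem => hz (Finset.mem_biUnion.mpr ⟨w, hw, hmem⟩)
          rw [N.avoid_supp A n w z this, mul_zero, zero_mul]
        · rw [N.p_eq_zero hw, zero_mul, zero_mul]
      · intro w hw z
        rw [N.p_eq_zero hw, zero_mul, zero_mul]

lemma avoid_chain (A : Set V) (w z : V) :
    ∀ (k n : ℕ) (x : V), N.avoid A n w z * N.avoid A k z x ≤ N.avoid A (n + k) w x
  | 0, n, x => by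
    rw [avoid_zero']
    by_cases h : z = x ∧ z ∉ A
    · rw [if_pos h, mul_one, Nat.add_zero, h.1]
    · rw [if_neg h, mul_zero]
      exact N.avoid_nonneg A (n + 0) w x
  | k + 1, n, x => by
    rw [avoid_succ', show n + (k + 1) = (n + k) + 1 from rfl, avoid_succ']
    by_cases hx : x ∈ A
    · rw [if_pos hx, if_pos hx, mul_zero]
    · rw [if_neg hx, if_neg hx, ← tsum_mul_left]
      refine Summable.tsum_le_tsum (fun u => ?_) ?_ ?_
      · rw [← mul_assoc]
        exact mul_le_mul_of_nonneg_right (avoid_chain A w z k n u) (N.p_nonneg u x)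
      · apply summable_of_ne_finset_zero (s := N.aSupp k z)
        intro u hu
        rw [N.avoid_supp A k z u hu, zero_mul, mul_zero]
      · apply summable_of_ne_finset_zero (s := N.aSupp (n + k) w)
        intro u hu
        rw [N.avoid_supp A (n + k) w u hu, zero_mul]

lemma cTot_mul_p (v z : V) : N.cTot v * N.p v z = N.c v z := by
  rw [Network.p, mul_div_cancel₀]
  exact (N.cTot_pos v).ne'

lemma avoid_symm (o : V) : ∀ (n : ℕ) (v x : V),
    N.cTot v * N.avoid {o} n v x = N.cTot x * N.avoid {o} n x v
  | 0, v, x => by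
    rw [avoid_zero', avoid_zero']
    by_cases h : v = x
    · subst h; rfl
    · rw [if_neg (fun hc => h hc.1), if_neg (fun hc => h hc.1.symm), mul_zero, mul_zero]
  | n + 1, v, x => by
    by_cases hv : v = o
    · subst hv
      rw [N.avoid_from {v} (n + 1) v x rfl, N.avoid_to {v} (n + 1) x v rfl,
        mul_zero, mul_zero]
    · by_cases hx : x = o
      · subst hx
        rw [N.avoid_to {x} (n + 1) v x rfl, N.avoid_from {x} (n + 1) x v rfl,
          mul_zero, mul_zero]
      · rw [N.avoid_fs {o} n v x (by simpa using hv), ← tsum_mul_left,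
          avoid_succ', if_neg (by simpa using hv), ← tsum_mul_left]
        have key : ∀ z, N.cTot v * (N.p v z * N.avoid {o} n z x)
            = N.cTot x * (N.avoid {o} n x z * N.p z v) := by
          intro z
          rw [← mul_assoc, N.cTot_mul_p v z, N.symm v z, ← N.cTot_mul_p z v]
          rw [show N.cTot z * N.p z v * N.avoid {o} n z x
              = (N.cTot z * N.avoid {o} n z x) * N.p z v by ring,
            avoid_symm o n z x]
          ring
        exact tsum_congr key

end Network

end DipoleAux2
section DipoleAux3

namespace Network

variable {V : Type*} (N : Network V)

/-- `P_v(τ_o > n)` -/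
noncomputable def mrem (o : V) (n : ℕ) (v : V) : ℝ := ∑' x, N.avoid {o} n v x

/-- `P_v(τ_o = j)` (for `j ≥ 1`; at `j = 0` it is the indicator of `o`). -/
noncomputable def fhit (o : V) : ℕ → V → ℝ
  | 0, z => if z = o then 1 else 0
  | j + 1, z => ∑' x, N.avoid {o} j z x * N.p x o

/-- `P_o(τ_o⁺ = j+1)` -/
noncomputable def rr (o : V) (j : ℕ) : ℝ := ∑' w, N.p o w * N.fhit o j w

lemma mrem_nonneg (o : V) (n : ℕ) (v : V) : 0 ≤ N.mrem o n v :=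
  tsum_nonneg fun x => N.avoid_nonneg _ n v x

lemma mrem_zero (o v : V) (hv : v ≠ o) : N.mrem o 0 v = 1 := by
  rw [mrem]
  have h : ∀ x, N.avoid {o} 0 v x = if x = v then 1 else 0 := by
    intro x
    rw [avoid_zero']
    by_cases h : x = v
    · subst h; rw [if_pos ⟨rfl, by simpa using hv⟩, if_pos rfl]
    · rw [if_neg (fun hc => h hc.1.symm), if_neg h]
  rw [tsum_congr h, tsum_ite_eq]

lemma fhit_nonneg (o : V) : ∀ (j : ℕ) (z : V), 0 ≤ N.fhit o j z
  | 0, z => by rw [fhit]; split <;> norm_num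
  | j + 1, z => tsum_nonneg fun x => mul_nonneg (N.avoid_nonneg _ j z x) (N.p_nonneg x o)

lemma fhit_zero_ne (o z : V) (hz : z ≠ o) : N.fhit o 0 z = 0 := by
  rw [fhit, if_neg hz]

lemma fhit_o (o : V) (j : ℕ) : N.fhit o (j + 1) o = 0 := by
  rw [fhit]
  refine (tsum_congr fun x => ?_).trans tsum_zero
  rw [N.avoid_from {o} j o x rfl, zero_mul]

lemma fhit_summable (o : V) (j : ℕ) (z : V) :
    Summable (fun x => N.avoid {o} j z x * N.p x o) :=
  summable_of_ne_finset_zero (s := N.aSupp j z)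
    (fun x hx => by rw [N.avoid_supp _ j z x hx, zero_mul])

/-- one-step recursion for the remaining mass -/
lemma mrem_succ (o : V) (n : ℕ) (v : V) :
    N.mrem o (n + 1) v = N.mrem o n v - N.fhit o (n + 1) v := by
  have hstep : ∀ x, N.avoid {o} (n + 1) v x
      = ∑' z, N.avoid {o} n v z * (if x = o then 0 else N.p z x) := by
    intro x
    rw [avoid_succ']
    by_cases hx : x = o
    · subst hx
      rw [if_pos (Set.mem_singleton x)]
      symm
      refine (tsum_congr fun z => ?_).trans tsum_zero
      rw [if_pos rfl, mul_zero]
    · rw [if_neg (by simpa using hx)]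
      refine tsum_congr fun z => ?_
      rw [if_neg hx]
  rw [mrem, tsum_congr hstep,
    ← Network.tsum_comm_fin (f := fun z x => N.avoid {o} n v z * (if x = o then 0 else N.p z x))
      (N.aSupp n v) ((N.aSupp n v).biUnion (fun z => (N.locFin z).toFinset)) ?_ ?_]
  · have key : ∀ z, ∑' x, N.avoid {o} n v z * (if x = o then 0 else N.p z x)
        = N.avoid {o} n v z - N.avoid {o} n v z * N.p z o := by
      intro z
      rw [tsum_mul_left]
      have h2 : ∀ x, (if x = o then 0 else N.p z x)
          = N.p z x - (if x = o then N.p z o else 0) := by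
        intro x
        by_cases hx : x = o
        · subst hx; rw [if_pos rfl, if_pos rfl, sub_self]
        · rw [if_neg hx, if_neg hx, sub_zero]
      rw [tsum_congr h2, Summable.tsum_sub (N.p_summable z)
        (summable_of_ne_finset_zero (s := {o}) (fun x hx => if_neg (by simpa using hx))),
        N.p_tsum z, tsum_ite_eq, mul_sub, mul_one]
    rw [tsum_congr key, Summable.tsum_sub (N.avoid_summable {o} n v) (N.fhit_summable o n v)]
    rw [mrem, fhit]
  · intro z hz x
    rw [N.avoid_supp _ n v z hz, zero_mul]
  · intro x hx z
    by_cases hz : z ∈ N.aSupp n v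
    · have hpx : N.p z x = 0 := by
        apply N.p_eq_zero
        intro hmem
        exact hx (Finset.mem_biUnion.mpr ⟨z, hz, hmem⟩)
      rw [hpx]
      split <;> simp
    · rw [N.avoid_supp _ n v z hz, zero_mul]

lemma mrem_succ_le (o : V) (n : ℕ) (v : V) : N.mrem o (n + 1) v ≤ N.mrem o n v := by
  rw [mrem_succ]
  linarith [N.fhit_nonneg o (n + 1) v]

lemma mrem_antitone (o : V) (v : V) : ∀ {k m : ℕ}, k ≤ m → N.mrem o m v ≤ N.mrem o k v := by
  intro k m h
  induction m with
  | zero => rw [Nat.le_zero.mp h]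
  | succ m ih =>
    rcases Nat.lt_or_ge k (m + 1) with h' | h'
    · exact (N.mrem_succ_le o m v).trans (ih (Nat.lt_succ_iff.mp h'))
    · rw [Nat.le_antisymm h h']

lemma mrem_telescope (o : V) (v : V) (hv : v ≠ o) : ∀ n : ℕ,
    N.mrem o n v = 1 - ∑ j ∈ Finset.range n, N.fhit o (j + 1) v
  | 0 => by rw [N.mrem_zero o v hv]; simp
  | n + 1 => by
    rw [mrem_succ, mrem_telescope o v hv n, Finset.sum_range_succ]
    ring

lemma mrem_chain (o : V) (n k : ℕ) (w z : V) :
    N.avoid {o} n w z * N.mrem o k z ≤ N.mrem o (n + k) w := by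
  rw [mrem, mrem, ← tsum_mul_left]
  refine Summable.tsum_le_tsum (fun x => N.avoid_chain {o} w z k n x) ?_
    (N.avoid_summable {o} (n + k) w)
  exact (N.avoid_summable {o} k z).mul_left _

lemma fhit_sum_le_one (o : V) (z : V) (n : ℕ) :
    ∑ j ∈ Finset.range n, N.fhit o j z ≤ 1 := by
  by_cases hz : z = o
  · subst hz
    induction n with
    | zero => simp
    | succ n ih =>
      rw [Finset.sum_range_succ]
      cases n with
      | zero => simp [fhit]
      | succ m => rw [N.fhit_o]; simpa using ih
  · cases n with
    | zero => simp
    | succ n =>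
      rw [Finset.sum_range_succ', N.fhit_zero_ne o z hz, add_zero]
      have := N.mrem_telescope o z hz n
      have h2 := N.mrem_nonneg o n z
      linarith

lemma rr_nonneg (o : V) (j : ℕ) : 0 ≤ N.rr o j :=
  tsum_nonneg fun w => mul_nonneg (N.p_nonneg o w) (N.fhit_nonneg o j w)

/-- first-step recursion for hitting-time probabilities -/
lemma fhit_fs (o : V) : ∀ (j : ℕ) (z : V), z ≠ o →
    N.fhit o (j + 1) z = ∑' w, N.p z w * N.fhit o j w
  | 0, z, hz => by
    have h1 : ∀ x, N.avoid {o} 0 z x * N.p x o = if x = z then N.p z o else 0 := by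
      intro x
      rw [avoid_zero']
      by_cases h : x = z
      · subst h; rw [if_pos ⟨rfl, by simpa using hz⟩, if_pos rfl, one_mul]
      · rw [if_neg (fun hc => h hc.1.symm), if_neg h, zero_mul]
    have h2 : ∀ w, N.p z w * N.fhit o 0 w = if w = o then N.p z o else 0 := by
      intro w
      rw [fhit]
      by_cases h : w = o
      · subst h; rw [if_pos rfl, if_pos rfl, mul_one]
      · rw [if_neg h, if_neg h, mul_zero]
    rw [fhit, tsum_congr h1, tsum_ite_eq, tsum_congr h2, tsum_ite_eq]
  | j + 1, z, hz => by
    have h1 : N.fhit o (j + 2) z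
        = ∑' x, ∑' w, N.p z w * N.avoid {o} j w x * N.p x o := by
      rw [fhit]
      refine tsum_congr fun x => ?_
      rw [N.avoid_fs {o} j z x (by simpa using hz), ← tsum_mul_right]
    rw [h1, ← Network.tsum_comm_fin
      (f := fun w x => N.p z w * N.avoid {o} j w x * N.p x o)
      ((N.locFin z).toFinset) (((N.locFin z).toFinset).biUnion (fun w => N.aSupp j w)) ?_ ?_]
    · refine tsum_congr fun w => ?_
      rw [show N.fhit o (j + 1) w = ∑' x, N.avoid {o} j w x * N.p x o from rfl,
        ← tsum_mul_left]
      exact tsum_congr fun x => mul_assoc _ _ _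
    · intro w hw x
      rw [N.p_eq_zero hw, zero_mul, zero_mul]
    · intro x hx w
      by_cases hw : w ∈ (N.locFin z).toFinset
      · have : x ∉ N.aSupp j w := fun hmem => hx (Finset.mem_biUnion.mpr ⟨w, hw, hmem⟩)
        rw [N.avoid_supp _ j w x this, mul_zero, zero_mul]
      · rw [N.p_eq_zero hw, zero_mul, zero_mul]

lemma sum_delta_zero (a : ℕ → ℝ) (n : ℕ) :
    ∑ j ∈ Finset.range (n + 1), (if j = 0 then a j else 0) = a 0 := by
  rw [Finset.sum_ite_eq' (Finset.range (n + 1)) 0 a]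
  simp

lemma fhit_eq_delta_at_o (o : V) (j : ℕ) : N.fhit o j o = if j = 0 then 1 else 0 := by
  cases j with
  | zero => rw [fhit, if_pos rfl]; rfl
  | succ j => rw [N.fhit_o, if_neg (Nat.succ_ne_zero j)]

/-- first-visit decomposition of the `n`-step transition probability -/
lemma pstep_decomp (o : V) : ∀ (n : ℕ) (z : V),
    N.pstep n z o = ∑ j ∈ Finset.range (n + 1), N.fhit o j z * N.pstep (n - j) o o
  | 0, z => by
    rw [Finset.sum_range_one]
    have h1 : N.pstep (0 - 0) o o = 1 := by rw [Nat.sub_self, pstep_zero', if_pos rfl]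
    rw [h1, mul_one, pstep_zero']
    rfl
  | n + 1, z => by
    by_cases hz : z = o
    · subst hz
      have h : ∀ j ∈ Finset.range (n + 2),
          N.fhit z j z * N.pstep (n + 1 - j) z z
            = if j = 0 then N.pstep (n + 1 - j) z z else 0 := by
        intro j _
        rw [N.fhit_eq_delta_at_o]
        split <;> simp
      rw [Finset.sum_congr rfl h, sum_delta_zero (fun j => N.pstep (n + 1 - j) z z) (n + 1)]
      rfl
    · rw [N.pstep_fs n z o]
      have h1 : ∀ w, N.p z w * N.pstep n w o
          = ∑ j ∈ Finset.range (n + 1), N.p z w * (N.fhit o j w * N.pstep (n - j) o o) := by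
        intro w
        rw [pstep_decomp o n w, Finset.mul_sum]
      rw [tsum_congr h1, Summable.tsum_finsetSum (fun j _ => ?_)]
      · have h2 : ∀ j ∈ Finset.range (n + 1),
            ∑' w, N.p z w * (N.fhit o j w * N.pstep (n - j) o o)
              = N.fhit o (j + 1) z * N.pstep (n - j) o o := by
          intro j _
          have : ∀ w, N.p z w * (N.fhit o j w * N.pstep (n - j) o o)
              = (N.p z w * N.fhit o j w) * N.pstep (n - j) o o := fun w => by ring
          rw [tsum_congr this, tsum_mul_right, ← N.fhit_fs o j z hz]
        rw [Finset.sum_congr rfl h2]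
        conv_rhs => rw [Finset.sum_range_succ']
        rw [N.fhit_zero_ne o z hz, zero_mul, add_zero]
        exact Finset.sum_congr rfl fun j _ => by rw [Nat.succ_sub_succ]
      · exact summable_of_ne_finset_zero (s := (N.locFin z).toFinset)
          (fun w hw => by rw [N.p_eq_zero hw, zero_mul])

/-- renewal equation at `o` -/
lemma pstep_renewal (o : V) (n : ℕ) :
    N.pstep (n + 1) o o = ∑ j ∈ Finset.range (n + 1), N.rr o j * N.pstep (n - j) o o := by
  rw [N.pstep_fs n o o]
  have h1 : ∀ w, N.p o w * N.pstep n w o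
      = ∑ j ∈ Finset.range (n + 1), N.p o w * (N.fhit o j w * N.pstep (n - j) o o) := by
    intro w
    rw [N.pstep_decomp o n w, Finset.mul_sum]
  rw [tsum_congr h1, Summable.tsum_finsetSum (fun j _ => ?_)]
  · refine Finset.sum_congr rfl fun j _ => ?_
    have : ∀ w, N.p o w * (N.fhit o j w * N.pstep (n - j) o o)
        = (N.p o w * N.fhit o j w) * N.pstep (n - j) o o := fun w => by ring
    rw [tsum_congr this, tsum_mul_right, rr]
  · exact summable_of_ne_finset_zero (s := (N.locFin o).toFinset)
      (fun w hw => by rw [N.p_eq_zero hw, zero_mul])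

end Network

end DipoleAux3
section DipoleAux4

namespace Network

variable {V : Type*} (N : Network V)

lemma sum_range_reindex (F : ℕ → ℕ → ℝ) :
    ∀ M : ℕ, ∑ n ∈ Finset.range M, ∑ j ∈ Finset.range (n + 1), F j (n - j)
      = ∑ j ∈ Finset.range M, ∑ k ∈ Finset.range (M - j), F j k
  | 0 => by simp
  | M + 1 => by
    rw [Finset.sum_range_succ, sum_range_reindex F M]
    rw [Finset.sum_range_succ (fun j => F j (M - j)) M]
    conv_rhs => rw [Finset.sum_range_succ]
    have hR : ∀ j ∈ Finset.range M, ∑ k ∈ Finset.range (M + 1 - j), F j k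
        = ∑ k ∈ Finset.range (M - j), F j k + F j (M - j) := by
      intro j hj
      have h : M + 1 - j = (M - j) + 1 := by
        rw [Finset.mem_range] at hj; omega
      rw [h, Finset.sum_range_succ]
    rw [Finset.sum_congr rfl hR, Finset.sum_add_distrib, Nat.sub_self,
      show M + 1 - M = 1 by omega, Finset.sum_range_one]
    ring

lemma claimA (o : V) (hrec : ¬ Summable (fun n => N.pstep n o o)) :
    ∀ ε : ℝ, 0 < ε → ∃ M, 1 - ε < ∑ j ∈ Finset.range M, N.rr o j := by
  intro ε hε
  by_contra hcon
  push_neg at hcon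
  apply hrec
  apply summable_of_sum_range_le (c := 1 / ε) (fun n => N.pstep_nonneg n o o)
  intro M
  cases M with
  | zero => simp; positivity
  | succ M =>
    have key : ∑ n ∈ Finset.range (M + 1), N.pstep n o o
        = 1 + ∑ j ∈ Finset.range M, N.rr o j * ∑ k ∈ Finset.range (M - j), N.pstep k o o := by
      rw [Finset.sum_range_succ']
      rw [show N.pstep 0 o o = 1 from by rw [pstep_zero', if_pos rfl]]
      have h1 : ∀ n ∈ Finset.range M, N.pstep (n + 1) o o
          = ∑ j ∈ Finset.range (n + 1), N.rr o j * N.pstep (n - j) o o :=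
        fun n _ => N.pstep_renewal o n
      rw [Finset.sum_congr rfl h1,
        sum_range_reindex (fun j k => N.rr o j * N.pstep k o o) M, add_comm]
      congr 1
      exact Finset.sum_congr rfl fun j _ => (Finset.mul_sum _ _ _).symm
    set G := ∑ n ∈ Finset.range (M + 1), N.pstep n o o with hG
    have hGnonneg : 0 ≤ G := Finset.sum_nonneg fun n _ => N.pstep_nonneg n o o
    have hGmono : ∀ k, k ≤ M + 1 → ∑ n ∈ Finset.range k, N.pstep n o o ≤ G := by
      intro k hk
      apply Finset.sum_le_sum_of_subset_of_nonneg (Finset.range_subset_range.mpr hk)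
      intro i _ _; exact N.pstep_nonneg i o o
    have h2 : G ≤ 1 + (1 - ε) * G := by
      have hs1 : ∑ j ∈ Finset.range M, N.rr o j * ∑ k ∈ Finset.range (M - j), N.pstep k o o
          ≤ ∑ j ∈ Finset.range M, N.rr o j * G := by
        refine Finset.sum_le_sum fun j hj => ?_
        exact mul_le_mul_of_nonneg_left (hGmono _ (by omega)) (N.rr_nonneg o j)
      have hs2 : ∑ j ∈ Finset.range M, N.rr o j * G ≤ (1 - ε) * G := by
        rw [← Finset.sum_mul]
        exact mul_le_mul_of_nonneg_right (hcon M) hGnonneg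
      linarith [key]
    have h3 : ε * G ≤ 1 := by nlinarith
    rw [le_div_iff₀ hε]
    linarith

lemma rr_sum_eq (o : V) (M : ℕ) :
    ∑ j ∈ Finset.range (M + 1), N.rr o j
      = 1 - ∑' w, N.p o w * (if w = o then 0 else N.mrem o M w) := by
  have h1 : ∑ j ∈ Finset.range (M + 1), N.rr o j
      = ∑' w, ∑ j ∈ Finset.range (M + 1), N.p o w * N.fhit o j w := by
    rw [Summable.tsum_finsetSum (fun j _ => summable_of_ne_finset_zero (s := (N.locFin o).toFinset)
      (fun w hw => by rw [N.p_eq_zero hw, zero_mul]))]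
    rfl
  have h2 : ∀ w, ∑ j ∈ Finset.range (M + 1), N.p o w * N.fhit o j w
      = N.p o w - N.p o w * (if w = o then 0 else N.mrem o M w) := by
    intro w
    rw [← Finset.mul_sum]
    by_cases hw : w = o
    · subst hw
      rw [if_pos rfl, mul_zero, sub_zero,
        Finset.sum_congr rfl (fun j _ => N.fhit_eq_delta_at_o w j),
        sum_delta_zero (fun _ => (1 : ℝ)) M, mul_one]
    · rw [if_neg hw]
      have hsum2 : ∑ j ∈ Finset.range (M + 1), N.fhit o j w = 1 - N.mrem o M w := by
        have ht := N.mrem_telescope o w hw M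
        rw [Finset.sum_range_succ', N.fhit_zero_ne o w hw, add_zero]
        linarith
      rw [hsum2]
      ring
  rw [h1, tsum_congr h2, Summable.tsum_sub (N.p_summable o)
    (summable_of_ne_finset_zero (s := (N.locFin o).toFinset)
      (fun w hw => by rw [N.p_eq_zero hw, zero_mul])), N.p_tsum o]

lemma reach (o : V) : ∀ z, z ≠ o → ∃ w n, 0 < N.p o w ∧ 0 < N.avoid {o} n w z := by
  suffices H : ∀ z, Relation.ReflTransGen (fun a b => 0 < N.c a b) o z → z ≠ o →
      ∃ w n, 0 < N.p o w ∧ 0 < N.avoid {o} n w z from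
    fun z hz => H z (N.conn o z) hz
  intro z hrtg
  induction hrtg with
  | refl => exact fun h => absurd rfl h
  | @tail b c hb hstep ih =>
    intro hc
    by_cases hb0 : b = o
    · subst hb0
      refine ⟨c, 0, N.p_pos hstep, ?_⟩
      rw [avoid_zero', if_pos ⟨rfl, by simpa using hc⟩]
      norm_num
    · obtain ⟨w, n, hpw, haw⟩ := ih hb0
      refine ⟨w, n + 1, hpw, ?_⟩
      rw [avoid_succ', if_neg (by simpa using hc)]
      calc (0 : ℝ) < N.avoid {o} n w b * N.p b c := mul_pos haw (N.p_pos hstep)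
      _ ≤ ∑' u, N.avoid {o} n w u * N.p u c := by
          refine Summable.le_tsum ?_ b fun u _ => mul_nonneg (N.avoid_nonneg _ n w u) (N.p_nonneg u c)
          exact summable_of_ne_finset_zero (s := N.aSupp n w)
            (fun u hu => by rw [N.avoid_supp _ n w u hu, zero_mul])

lemma mrem_small (o y : V) (hrec : ¬ Summable (fun n => N.pstep n o o)) (hy : y ≠ o) :
    ∀ ε : ℝ, 0 < ε → ∃ K, N.mrem o K y < ε := by
  intro ε hε
  obtain ⟨w, n0, hpw, haw⟩ := N.reach o y hy
  have hw0 : w ≠ o := by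
    intro h
    rw [h, N.avoid_from {o} n0 o y rfl] at haw
    exact lt_irrefl 0 haw
  have hδpos : 0 < ε * (N.p o w * N.avoid {o} n0 w y) := mul_pos hε (mul_pos hpw haw)
  obtain ⟨M0, hM0⟩ := N.claimA o hrec _ hδpos
  have hM1 : 1 - ε * (N.p o w * N.avoid {o} n0 w y)
      < ∑ j ∈ Finset.range (M0 + 1), N.rr o j := by
    refine lt_of_lt_of_le hM0 ?_
    refine Finset.sum_le_sum_of_subset_of_nonneg
      (Finset.range_subset_range.mpr (Nat.le_succ M0)) fun i _ _ => N.rr_nonneg o i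
  rw [N.rr_sum_eq o M0] at hM1
  have h2 : ∑' u, N.p o u * (if u = o then 0 else N.mrem o M0 u)
      < ε * (N.p o w * N.avoid {o} n0 w y) := by linarith
  have h3 : N.p o w * N.mrem o M0 w < ε * (N.p o w * N.avoid {o} n0 w y) := by
    have hle : N.p o w * (if w = o then 0 else N.mrem o M0 w)
        ≤ ∑' u, N.p o u * (if u = o then 0 else N.mrem o M0 u) := by
      refine Summable.le_tsum (f := fun u => N.p o u * (if u = o then 0 else N.mrem o M0 u))
        (summable_of_ne_finset_zero (s := (N.locFin o).toFinset)
          (fun u hu => by rw [N.p_eq_zero hu, zero_mul])) w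
        (fun u _ => mul_nonneg (N.p_nonneg o u) ?_)
      split
      · exact le_refl 0
      · exact N.mrem_nonneg o M0 u
    rw [if_neg hw0] at hle
    linarith
  have h4 : N.mrem o M0 w < ε * N.avoid {o} n0 w y := by
    have heq : ε * (N.p o w * N.avoid {o} n0 w y)
        = N.p o w * (ε * N.avoid {o} n0 w y) := by ring
    rw [heq] at h3
    exact (mul_lt_mul_iff_right₀ hpw).mp h3
  have h5 : N.avoid {o} n0 w y * N.mrem o M0 y ≤ N.mrem o M0 w :=
    (N.mrem_chain o n0 M0 w y).trans (N.mrem_antitone o w (Nat.le_add_left M0 n0))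
  refine ⟨M0, ?_⟩
  have h6 : N.avoid {o} n0 w y * N.mrem o M0 y < ε * N.avoid {o} n0 w y :=
    h5.trans_lt h4
  have heq2 : ε * N.avoid {o} n0 w y = N.avoid {o} n0 w y * ε := by ring
  rw [heq2] at h6
  exact (mul_lt_mul_iff_right₀ haw).mp h6

lemma fhit_summable_in_n (o y : V) (hy : y ≠ o) :
    Summable (fun n => N.fhit o (n + 1) y) := by
  apply summable_of_sum_range_le (c := 1) (fun n => N.fhit_nonneg o (n + 1) y)
  intro K
  have ht := N.mrem_telescope o y hy K
  have hm := N.mrem_nonneg o K y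
  linarith

lemma fhit_tsum_one (o y : V) (hrec : ¬ Summable (fun n => N.pstep n o o)) (hy : y ≠ o) :
    ∑' n, N.fhit o (n + 1) y = 1 := by
  have hpart : ∀ K, ∑ n ∈ Finset.range K, N.fhit o (n + 1) y = 1 - N.mrem o K y := by
    intro K
    have := N.mrem_telescope o y hy K
    linarith
  have htend := (N.fhit_summable_in_n o y hy).hasSum.tendsto_sum_nat
  have hm : Tendsto (fun K => N.mrem o K y) atTop (nhds 0) := by
    rw [Metric.tendsto_atTop]
    intro ε hε
    obtain ⟨K0, hK0⟩ := N.mrem_small o y hrec hy ε hε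
    refine ⟨K0, fun n hn => ?_⟩
    rw [Real.dist_eq, sub_zero, abs_of_nonneg (N.mrem_nonneg o n y)]
    exact lt_of_le_of_lt (N.mrem_antitone o y hn) hK0
  have h1 : Tendsto (fun K => ∑ n ∈ Finset.range K, N.fhit o (n + 1) y) atTop (nhds 1) := by
    have h := (tendsto_const_nhds (x := (1 : ℝ)) (f := atTop)).sub hm
    rw [sub_zero] at h
    exact h.congr (fun K => (hpart K).symm)
  exact tendsto_nhds_unique htend h1

end Network

end DipoleAux4
section DipoleAux5

namespace Network

variable {V : Type*} (N : Network V)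

lemma lap_eq (h : V → ℝ) (v : V) :
    N.lap h v = (∑' x, N.c v x * h x) - N.cTot v * h v := by
  rw [lap]
  have h1 : ∀ x, N.c v x * (h x - h v) = N.c v x * h x - N.c v x * h v := fun x => by ring
  rw [tsum_congr h1, Summable.tsum_sub
    (summable_of_ne_finset_zero (s := (N.locFin v).toFinset)
      (fun x hx => by rw [N.c_eq_zero hx, zero_mul]))
    ((N.c_summable v).mul_right (h v)), tsum_mul_right]
  rfl

lemma tsum_nat_comm (F : V → ℕ → ℝ) (s : Finset V)
    (hsupp : ∀ x ∉ s, ∀ n, F x n = 0) (hsum : ∀ x, Summable (F x)) :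
    ∑' x, ∑' n, F x n = ∑' n, ∑' x, F x n := by
  have h1 : (∑' x, ∑' n, F x n) = ∑ x ∈ s, ∑' n, F x n :=
    tsum_eq_sum (fun x hx => (tsum_congr (hsupp x hx)).trans tsum_zero)
  rw [h1, ← Summable.tsum_finsetSum (fun x _ => hsum x)]
  exact tsum_congr fun n => (tsum_eq_sum (fun x hx => hsupp x hx n)).symm

lemma greenK_oo (o y : V) : N.GreenK o o y = 0 := by
  rw [GreenK]
  exact (tsum_congr fun n => N.avoid_from {o} n o y rfl).trans tsum_zero

lemma g_oo (o y : V) : N.g o o y = 0 := by rw [Network.g, N.greenK_oo, zero_div]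

lemma greenK_symm (o y x : V) :
    N.cTot x * N.GreenK o x y = N.cTot y * N.GreenK o y x := by
  rw [GreenK, GreenK, ← tsum_mul_left, ← tsum_mul_left]
  exact tsum_congr fun n => N.avoid_symm o n x y

lemma summable_symm (o y : V) (hsum : ∀ v, Summable (fun n => N.avoid {o} n v y))
    (x : V) : Summable (fun n => N.avoid {o} n y x) := by
  have h : ∀ n, N.avoid {o} n y x = (N.cTot x / N.cTot y) * N.avoid {o} n x y := by
    intro n
    have hs := N.avoid_symm o n y x
    have h0 := (N.cTot_pos y).ne'
    field_simp
    linarith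
  exact (Summable.mul_left _ (hsum x)).congr fun n => (h n).symm

lemma lap_g (o y : V) (hy : y ≠ o)
    (hrec : ¬ Summable (fun n => N.pstep n o o))
    (hsum : ∀ v, Summable (fun n => N.avoid {o} n v y)) (v : V) :
    N.lap (fun u => N.g o u y) v = (if v = o then 1 else 0) - (if v = y then 1 else 0) := by
  rw [N.lap_eq]
  have hcy0 := (N.cTot_pos y).ne'
  by_cases hv : v = o
  · rw [hv, N.g_oo, mul_zero, sub_zero, if_pos rfl, if_neg (fun h => hy h.symm), sub_zero]
    have hterm : ∀ x, N.c o x * N.g o x y = ∑' n, N.avoid {o} n y x * N.p x o := by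
      intro x
      have hx0 := (N.cTot_pos x).ne'
      have hsymm := N.greenK_symm o y x
      have hG : N.GreenK o x y = N.cTot y * N.GreenK o y x / N.cTot x := by
        field_simp
        linarith
      rw [tsum_mul_right, show (∑' n, N.avoid {o} n y x) = N.GreenK o y x from rfl,
        Network.g, hG, Network.p, N.symm x o]
      field_simp
    rw [tsum_congr hterm,
      tsum_nat_comm (fun x n => N.avoid {o} n y x * N.p x o) (N.locFin o).toFinset
        (fun x hx n => by
          have hpz : N.p x o = 0 := by
            rw [Network.p, ← N.symm o x, N.c_eq_zero hx, zero_div]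
          rw [hpz, mul_zero])
        (fun x => (N.summable_symm o y hsum x).mul_right _)]
    have hfh : ∀ n, ∑' x, N.avoid {o} n y x * N.p x o = N.fhit o (n + 1) y :=
      fun n => rfl
    rw [tsum_congr hfh, N.fhit_tsum_one o y hrec hy]
  · rw [if_neg hv]
    have hterm : ∀ x, N.c v x * N.g o x y
        = (∑' n, N.c v x * N.avoid {o} n x y) / N.cTot y := by
      intro x
      rw [Network.g, GreenK, ← mul_div_assoc, ← tsum_mul_left]
    have hdiv : ∑' x, (∑' n, N.c v x * N.avoid {o} n x y) / N.cTot y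
        = (∑' x, ∑' n, N.c v x * N.avoid {o} n x y) / N.cTot y := by
      simp only [div_eq_mul_inv]
      rw [tsum_mul_right]
    rw [tsum_congr hterm, hdiv,
      tsum_nat_comm (fun x n => N.c v x * N.avoid {o} n x y) (N.locFin v).toFinset
        (fun x hx n => by rw [N.c_eq_zero hx, zero_mul])
        (fun x => (hsum x).mul_left _)]
    have hn : ∀ n, ∑' x, N.c v x * N.avoid {o} n x y
        = N.cTot v * N.avoid {o} (n + 1) v y := by
      intro n
      rw [N.avoid_fs {o} n v y (by simpa using hv), ← tsum_mul_left]
      refine tsum_congr fun x => ?_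
      rw [← mul_assoc, N.cTot_mul_p v x]
    rw [tsum_congr hn, tsum_mul_left]
    have hshift : ∑' n, N.avoid {o} (n + 1) v y
        = N.GreenK o v y - N.avoid {o} 0 v y := by
      have h := Summable.tsum_eq_zero_add (hsum v)
      rw [GreenK]
      linarith
    rw [hshift, Network.g, avoid_zero']
    by_cases hvy : v = y
    · subst hvy
      rw [if_pos ⟨rfl, by simpa using hv⟩, if_pos rfl]
      have h0 := (N.cTot_pos v).ne'
      field_simp
      ring
    · rw [if_neg (fun hc => hvy hc.1), if_neg hvy]
      rw [sub_zero]
      ring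

lemma harmonic_zero (o : V) (h : V → ℝ) (hnn : ∀ v, 0 ≤ h v) (ho : h o = 0)
    (hlap0 : ∀ v, (∑' x, N.c v x * h x) - N.cTot v * h v = 0) : ∀ z, h z = 0 := by
  suffices H : ∀ z, Relation.ReflTransGen (fun a b => 0 < N.c a b) o z → h z = 0 from
    fun z => H z (N.conn o z)
  intro z hrtg
  induction hrtg with
  | refl => exact ho
  | @tail b c hb hstep ih =>
    have hsum0 : ∑' x, N.c b x * h x = 0 := by
      have h1 := hlap0 b
      rw [ih, mul_zero, sub_zero] at h1
      exact h1
    have hle : N.c b c * h c ≤ 0 := by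
      rw [← hsum0]
      exact Summable.le_tsum (summable_of_ne_finset_zero (s := (N.locFin b).toFinset)
        (fun x hx => by rw [N.c_eq_zero hx, zero_mul])) c
        (fun x _ => mul_nonneg (N.nonneg b x) (hnn x))
    have h2 : N.c b c * h c = 0 := le_antisymm hle (mul_nonneg (N.nonneg b c) (hnn c))
    exact (mul_eq_zero.mp h2).resolve_left (ne_of_gt hstep)

end Network

end DipoleAux5

/-- In a recurrent network, the dipole from `o` to `y` is unique: any
nonnegative `f` with `f(o) = 0` and `Δf = 1_o − 1_y` equals the Green density `g_o(·,y)`. -/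
theorem dipole_unique {V : Type*} (N : Network V) (hrec : N.Recurrent)
    (o y : V) (hy : y ≠ o) (f : V → ℝ)
    (hf0 : ∀ v, 0 ≤ f v) (hfo : f o = 0)
    (hlap : ∀ v, N.lap f v = (if v = o then (1 : ℝ) else 0) - (if v = y then 1 else 0)) :
    ∀ v, f v = N.g o v y := by
  intro v
  have hyo : y ≠ o := hy
  have hcy0 : (0 : ℝ) < N.cTot y := N.cTot_pos y
  -- the single-site equation derived from the Laplacian hypothesis
  have site : ∀ z, z ≠ o →
      ∑' x, N.p z x * f x = f z - (if z = y then (N.cTot y)⁻¹ else 0) := by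
    intro z hz
    have hl := hlap z
    rw [N.lap_eq, if_neg hz] at hl
    have h1 : ∀ x, N.p z x * f x = (N.c z x * f x) * (N.cTot z)⁻¹ := by
      intro x; rw [Network.p]; ring
    rw [tsum_congr h1, tsum_mul_right]
    have hz0 := (N.cTot_pos z).ne'
    by_cases hzy : z = y
    · subst hzy
      rw [if_pos rfl] at hl ⊢
      field_simp
      linarith
    · rw [if_neg hzy] at hl ⊢
      field_simp
      linarith
  -- one-step recursion for S n v := ∑' x, avoid n v x * f x
  have Srec : ∀ (n : ℕ) (v : V), (∑' x, N.avoid {o} (n + 1) v x * f x)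
      = (∑' x, N.avoid {o} n v x * f x) - N.avoid {o} n v y * (N.cTot y)⁻¹ := by
    intro n v
    have hstep : ∀ x, N.avoid {o} (n + 1) v x * f x
        = (∑' z, N.avoid {o} n v z * N.p z x) * f x := by
      intro x
      rw [Network.avoid_succ']
      by_cases hx : x = o
      · rw [hx, hfo, mul_zero, mul_zero]
      · rw [if_neg (by simpa using hx)]
    rw [tsum_congr hstep]
    have hstep2 : ∀ x, (∑' z, N.avoid {o} n v z * N.p z x) * f x
        = ∑' z, N.avoid {o} n v z * N.p z x * f x := fun x => by rw [← tsum_mul_right]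
    rw [tsum_congr hstep2,
      ← Network.tsum_comm_fin (f := fun z x => N.avoid {o} n v z * N.p z x * f x)
        (N.aSupp n v) ((N.aSupp n v).biUnion fun z => (N.locFin z).toFinset) ?_ ?_]
    · have hz1 : ∀ z, (∑' x, N.avoid {o} n v z * N.p z x * f x)
          = N.avoid {o} n v z * f z
            - (if z = y then N.avoid {o} n v y * (N.cTot y)⁻¹ else 0) := by
        intro z
        by_cases hzo : z = o
        · have ha0 : N.avoid {o} n v z = 0 :=
            N.avoid_to {o} n v z (by simpa using hzo)
          refine ((tsum_congr fun x => by rw [ha0, zero_mul, zero_mul]).trans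
            tsum_zero).trans ?_
          rw [ha0, zero_mul, if_neg (fun hc => hyo (hc.symm.trans hzo))]
          norm_num
        · have h3 : ∀ x, N.avoid {o} n v z * N.p z x * f x
              = N.avoid {o} n v z * (N.p z x * f x) := fun x => mul_assoc _ _ _
          rw [tsum_congr h3, tsum_mul_left, site z hzo]
          by_cases hzy : z = y
          · subst hzy; rw [if_pos rfl, if_pos rfl]; ring
          · rw [if_neg hzy, if_neg hzy]; ring
      rw [tsum_congr hz1, Summable.tsum_sub
        (summable_of_ne_finset_zero (s := N.aSupp n v)
          (fun z hz => by rw [N.avoid_supp _ n v z hz, zero_mul]))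
        (summable_of_ne_finset_zero (s := {y})
          (fun z hz => if_neg (by simpa using hz)))]
      congr 1
      exact tsum_ite_eq y (fun _ => N.avoid {o} n v y * (N.cTot y)⁻¹)
    · intro z hz x
      rw [N.avoid_supp _ n v z hz, zero_mul, zero_mul]
    · intro x hx z
      by_cases hz : z ∈ N.aSupp n v
      · have hp0 : N.p z x = 0 :=
          N.p_eq_zero (fun hmem => hx (Finset.mem_biUnion.mpr ⟨z, hz, hmem⟩))
        rw [hp0, mul_zero, zero_mul]
      · rw [N.avoid_supp _ n v z hz, zero_mul, zero_mul]
  -- telescoping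
  have hS0 : ∀ w, w ≠ o → (∑' x, N.avoid {o} 0 w x * f x) = f w := by
    intro w hw
    have h1 : ∀ x, N.avoid {o} 0 w x * f x = if x = w then f w else 0 := by
      intro x
      rw [Network.avoid_zero']
      by_cases h : x = w
      · rw [h, if_pos ⟨rfl, by simpa using hw⟩, one_mul, if_pos rfl]
      · rw [if_neg (fun hc => h hc.1.symm), zero_mul, if_neg h]
    rw [tsum_congr h1, tsum_ite_eq]
  have Stel : ∀ w, w ≠ o → ∀ n : ℕ, f w = (∑' x, N.avoid {o} n w x * f x)
      + (∑ k ∈ Finset.range n, N.avoid {o} k w y) * (N.cTot y)⁻¹ := by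
    intro w hw n
    induction n with
    | zero => rw [Finset.sum_range_zero, zero_mul, add_zero, hS0 w hw]
    | succ n ih =>
      rw [Srec n w, Finset.sum_range_succ, add_mul]
      linarith
  have hSnn : ∀ (n : ℕ) (w : V), 0 ≤ ∑' x, N.avoid {o} n w x * f x :=
    fun n w => tsum_nonneg fun x => mul_nonneg (N.avoid_nonneg _ n w x) (hf0 x)
  -- bound on partial sums
  have hbound : ∀ w, w ≠ o → ∀ K : ℕ,
      ∑ k ∈ Finset.range K, N.avoid {o} k w y ≤ f w * N.cTot y := by
    intro w hw K
    have h1 := Stel w hw K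
    have h2 := hSnn K w
    have h3 : (∑ k ∈ Finset.range K, N.avoid {o} k w y) * (N.cTot y)⁻¹
        = f w - ∑' x, N.avoid {o} K w x * f x := by linarith
    calc ∑ k ∈ Finset.range K, N.avoid {o} k w y
        = (∑ k ∈ Finset.range K, N.avoid {o} k w y) * (N.cTot y)⁻¹ * N.cTot y := by
          field_simp
      _ = (f w - ∑' x, N.avoid {o} K w x * f x) * N.cTot y := by rw [h3]
      _ ≤ f w * N.cTot y := mul_le_mul_of_nonneg_right (by linarith) hcy0.le
  -- summability of the Green series
  have hsum : ∀ w, Summable (fun n => N.avoid {o} n w y) := by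
    intro w
    by_cases hw : w = o
    · have hz : ∀ n, N.avoid {o} n w y = 0 :=
        fun n => N.avoid_from {o} n w y (by simpa using hw)
      exact summable_of_ne_finset_zero (s := (∅ : Finset ℕ)) (fun n _ => hz n)
    · exact summable_of_sum_range_le (c := f w * N.cTot y)
        (fun n => N.avoid_nonneg _ n w y) (hbound w hw)
  -- g ≤ f
  have hgle : ∀ w, N.g o w y ≤ f w := by
    intro w
    by_cases hw : w = o
    · rw [hw, N.g_oo, ← hfo]
    · rw [Network.g, Network.GreenK, div_le_iff₀ hcy0]
      exact Summable.tsum_le_of_sum_range_le (hsum w) (hbound w hw)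
  -- the difference is harmonic, nonnegative, vanishing at o
  have hlg := N.lap_g o y hyo (hrec o) hsum
  have hlap_h : ∀ w, (∑' x, N.c w x * (f x - N.g o x y))
      - N.cTot w * (f w - N.g o w y) = 0 := by
    intro w
    have h1 := hlap w
    have h2 := hlg w
    rw [N.lap_eq] at h1 h2
    have h3 : ∑' x, N.c w x * (f x - N.g o x y)
        = (∑' x, N.c w x * f x) - ∑' x, N.c w x * N.g o x y := by
      rw [← Summable.tsum_sub
        (summable_of_ne_finset_zero (s := (N.locFin w).toFinset)
          (fun x hx => by rw [N.c_eq_zero hx, zero_mul]))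
        (summable_of_ne_finset_zero (s := (N.locFin w).toFinset)
          (fun x hx => by rw [N.c_eq_zero hx, zero_mul]))]
      exact tsum_congr fun x => by ring
    rw [h3]
    have h4 : N.cTot w * (f w - N.g o w y)
        = N.cTot w * f w - N.cTot w * N.g o w y := by ring
    rw [h4]
    linarith
  have hzero := N.harmonic_zero o (fun w => f w - N.g o w y)
    (fun w => by simpa using hgle w)
    (show f o - N.g o o y = 0 by rw [hfo, N.g_oo, sub_zero])
    hlap_h
  have h9 : f v - N.g o v y = 0 := hzero v
  linarith
end

section
/- Let h be a potential on a recurrent rooted network and {Y_n} the h-process started at v∈S_h. Then for every M>0, P^h_v(h(Y_ℓ)>M) → 1 as ℓ→∞. -/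
open scoped Classical
open Filter Topology MeasureTheory ProbabilityTheory

namespace HProc

variable {V : Type*} [Inhabited V] (N : Network V)

noncomputable def csupp (x : V) : Finset V := (N.locFin x).toFinset

lemma mem_csupp {x y : V} : y ∈ csupp N x ↔ 0 < N.c x y := by
  simp [csupp]

lemma c_eq_zero_of_not_mem {x y : V} (hy : y ∉ csupp N x) : N.c x y = 0 :=
  le_antisymm (by simpa [mem_csupp] using hy) (N.nonneg x y)

lemma cTot_eq (x : V) : N.cTot x = ∑ y ∈ csupp N x, N.c x y :=
  tsum_eq_sum (fun y hy => c_eq_zero_of_not_mem N hy)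

lemma cTot_pos (x : V) : 0 < N.cTot x := N.deg_pos x

lemma p_nonneg (x y : V) : 0 ≤ N.p x y :=
  div_nonneg (N.nonneg x y) (cTot_pos N x).le

lemma p_eq_zero_of_not_mem {x y : V} (hy : y ∉ csupp N x) : N.p x y = 0 := by
  simp [Network.p, c_eq_zero_of_not_mem N hy]

lemma sum_p (x : V) : ∑ y ∈ csupp N x, N.p x y = 1 := by
  simp only [Network.p]
  rw [← Finset.sum_div, ← cTot_eq, div_self (cTot_pos N x).ne']

lemma lap_eq (f : V → ℝ) (x : V) :
    N.lap f x = ∑ y ∈ csupp N x, N.c x y * (f y - f x) :=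
  tsum_eq_sum (fun y hy => by simp [c_eq_zero_of_not_mem N hy])

noncomputable def paths (x : V) : ℕ → Finset (List V)
  | 0 => {[x]}
  | n + 1 => (paths x n).biUnion (fun l => (csupp N l.headI).image (fun y => y :: l))

lemma mem_paths_succ {x : V} {n : ℕ} {l : List V} :
    l ∈ paths N x (n + 1) ↔ ∃ t ∈ paths N x n, ∃ y ∈ csupp N t.headI, l = y :: t := by
  simp [paths, eq_comm]

lemma paths_shape {x : V} : ∀ {n : ℕ} {l : List V}, l ∈ paths N x n →
    ∃ t : List V, l = t ++ [x] ∧ t.length = n := by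
  intro n
  induction n with
  | zero => intro l hl; simp only [paths, Finset.mem_singleton] at hl; exact ⟨[], by simp [hl]⟩
  | succ n ih =>
    intro l hl
    rcases (mem_paths_succ N).1 hl with ⟨t, ht, y, _, rfl⟩
    rcases ih ht with ⟨t', rfl, hlen⟩
    exact ⟨y :: t', by simp, by simp [hlen]⟩

lemma paths_ne_nil {x : V} {n : ℕ} {l : List V} (hl : l ∈ paths N x n) : l ≠ [] := by
  rcases paths_shape N hl with ⟨t, rfl, -⟩; simp

lemma paths_length {x : V} {n : ℕ} {l : List V} (hl : l ∈ paths N x n) : l.length = n + 1 := by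
  rcases paths_shape N hl with ⟨t, rfl, hlen⟩; simp [hlen]

lemma sum_paths_succ {x : V} {n : ℕ} (F : List V → ℝ) :
    ∑ l ∈ paths N x (n + 1), F l
      = ∑ l ∈ paths N x n, ∑ y ∈ csupp N l.headI, F (y :: l) := by
  rw [paths, Finset.sum_biUnion]
  · refine Finset.sum_congr rfl (fun l _ => ?_)
    rw [Finset.sum_image]
    intro a _ b _ hab
    exact (List.cons.injEq _ _ _ _ ▸ hab).1
  · intro a _ b _ hab
    refine Finset.disjoint_left.2 (fun l hla hlb => hab ?_)
    simp only [Finset.mem_image] at hla hlb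
    rcases hla with ⟨y, _, rfl⟩
    rcases hlb with ⟨y', _, h⟩
    exact ((List.cons.injEq _ _ _ _ ▸ h).2).symm

noncomputable def wt (q : V → V → ℝ) : List V → ℝ
  | [] => 1
  | [_] => 1
  | y :: x :: t => wt q (x :: t) * q x y

lemma wt_cons (q : V → V → ℝ) {t : List V} (ht : t ≠ []) (y : V) :
    wt q (y :: t) = wt q t * q t.headI y := by
  cases t with
  | nil => exact absurd rfl ht
  | cons a s => rfl

lemma wt_nonneg {q : V → V → ℝ} (hq : ∀ x y, 0 ≤ q x y) : ∀ l : List V, 0 ≤ wt q l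
  | [] => zero_le_one
  | [_] => zero_le_one
  | y :: x :: t => mul_nonneg (wt_nonneg hq (x :: t)) (hq x y)


lemma headI_mem {l : List V} (hl : l ≠ []) : l.headI ∈ l := by
  cases l with
  | nil => exact absurd rfl hl
  | cons a t => exact List.mem_cons_self

lemma glue_headI {x : V} {j : ℕ} {l₁ l₂ : List V} (h₂ : l₂ ∈ paths N x j)
    (h₁ : l₁.headI = x) : (l₂.dropLast ++ l₁).headI = l₂.headI := by
  rcases paths_shape N h₂ with ⟨t, rfl, hlen⟩
  cases t with
  | nil => simp [h₁]
  | cons a s =>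
    rw [show (a :: s ++ [x]) = (a :: s) ++ [x] by simp, List.dropLast_concat]
    simp

lemma glue_ne_nil {l₁ l₂ : List V} (h₁ : l₁ ≠ []) : l₂.dropLast ++ l₁ ≠ [] := by
  simp [h₁]

lemma wt_glue (q : V → V → ℝ) {x : V} : ∀ {j : ℕ} {l₁ l₂ : List V}, l₂ ∈ paths N x j →
    l₁ ≠ [] → l₁.headI = x → wt q (l₂.dropLast ++ l₁) = wt q l₂ * wt q l₁ := by
  intro j
  induction j with
  | zero =>
    intro l₁ l₂ h₂ h₁ hh
    simp only [paths, Finset.mem_singleton] at h₂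
    subst h₂; simp [wt]
  | succ n ih =>
    intro l₁ l₂ h₂ h₁ hh
    rcases (mem_paths_succ N).1 h₂ with ⟨t, ht, y, hy, rfl⟩
    have htne : t ≠ [] := paths_ne_nil N ht
    have hdl : (y :: t).dropLast = y :: t.dropLast := by
      cases t with
      | nil => exact absurd rfl htne
      | cons a s => rfl
    rw [hdl, List.cons_append,
      wt_cons q (glue_ne_nil h₁) y, wt_cons q htne y, ih ht h₁ hh, glue_headI N ht hh]
    ring

lemma sum_paths_wt_p (x : V) : ∀ n : ℕ, ∑ l ∈ paths N x n, wt N.p l = 1 := by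
  intro n
  induction n with
  | zero => simp [paths, wt]
  | succ n ih =>
    rw [sum_paths_succ]
    calc ∑ l ∈ paths N x n, ∑ y ∈ csupp N l.headI, wt N.p (y :: l)
        = ∑ l ∈ paths N x n, wt N.p l := by
          refine Finset.sum_congr rfl (fun l hl => ?_)
          have : ∀ y ∈ csupp N l.headI, wt N.p (y :: l) = wt N.p l * N.p l.headI y :=
            fun y _ => wt_cons _ (paths_ne_nil N hl) y
          rw [Finset.sum_congr rfl this, ← Finset.mul_sum, sum_p, mul_one]
      _ = 1 := ih

lemma chop (x : V) (k : ℕ) :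
    ∀ n, k ≤ n → ∀ H : List V → ℝ, ∑ l ∈ paths N x n, H l
      = ∑ l₁ ∈ paths N x k, ∑ l₂ ∈ paths N l₁.headI (n - k), H (l₂.dropLast ++ l₁) := by
  intro n
  induction n with
  | zero =>
    intro hk H
    interval_cases k
    simp [paths]
  | succ n ih =>
    intro hk H
    rcases eq_or_lt_of_le hk with hk' | hk'
    · subst hk'
      simp only [Nat.sub_self]
      refine (Finset.sum_congr rfl (fun l₁ h₁ => ?_)).symm
      show ∑ l₂ ∈ ({[l₁.headI]} : Finset (List V)), H (l₂.dropLast ++ l₁) = H l₁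
      simp
    · have hkn : k ≤ n := Nat.lt_succ_iff.1 hk'
      rw [sum_paths_succ, ih hkn (fun l => ∑ y ∈ csupp N l.headI, H (y :: l))]
      refine Finset.sum_congr rfl (fun l₁ h₁ => ?_)
      rw [show n + 1 - k = (n - k) + 1 by omega, sum_paths_succ]
      refine Finset.sum_congr rfl (fun l₂ h₂ => ?_)
      rw [glue_headI N h₂ rfl]
      refine Finset.sum_congr rfl (fun y _ => ?_)
      congr 1
      rw [show (y :: l₂).dropLast = y :: l₂.dropLast from
        List.dropLast_cons_of_ne_nil (paths_ne_nil N h₂), List.cons_append]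


def FR (x : V) (s : List V) : Prop := s.headI = x ∧ x ∉ s.tail.dropLast

lemma fr_partition (x : V) : ∀ n, 1 ≤ n → ∀ l ∈ paths N x n,
    ((if x ∉ l.dropLast then (1:ℝ) else 0)
      + ∑ k ∈ Finset.Icc 1 n, (if FR x (l.drop (n - k)) then (1:ℝ) else 0)) = 1 := by
  intro n
  induction n with
  | zero => omega
  | succ n ih =>
    intro _ l hl
    rcases (mem_paths_succ N).1 hl with ⟨t, ht, y, hy, rfl⟩
    have htne : t ≠ [] := paths_ne_nil N ht
    have hsplit : ∑ k ∈ Finset.Icc 1 (n + 1), (if FR x ((y :: t).drop (n + 1 - k)) then (1:ℝ) else 0)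
        = (∑ k ∈ Finset.Icc 1 n, (if FR x (t.drop (n - k)) then (1:ℝ) else 0))
          + (if FR x (y :: t) then (1:ℝ) else 0) := by
      rw [Finset.sum_Icc_succ_top (by omega : 1 ≤ n + 1)]
      congr 1
      · refine Finset.sum_congr rfl (fun k hk => ?_)
        have hk' : k ≤ n := (Finset.mem_Icc.1 hk).2
        rw [show n + 1 - k = (n - k) + 1 by omega, List.drop_succ_cons]
      · rw [Nat.sub_self, List.drop_zero]
    rw [hsplit]
    have hdl : (y :: t).dropLast = y :: t.dropLast := List.dropLast_cons_of_ne_nil htne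
    have hfr : FR x (y :: t) ↔ (y = x ∧ x ∉ t.dropLast) := by
      unfold FR; simp
    rw [hdl]
    have hprev : ((if x ∉ t.dropLast then (1:ℝ) else 0)
        + ∑ k ∈ Finset.Icc 1 n, (if FR x (t.drop (n - k)) then (1:ℝ) else 0)) = 1 := by
      rcases Nat.eq_zero_or_pos n with hn0 | hn1
      · subst hn0
        simp only [paths, Finset.mem_singleton] at ht
        subst ht
        simp
      · exact ih hn1 t ht
    by_cases hmem : x ∈ t.dropLast
    · have h2 : x ∈ y :: t.dropLast := List.mem_cons_of_mem _ hmem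
      have h3 : ¬ FR x (y :: t) := by rw [hfr]; tauto
      rw [if_neg (not_not_intro hmem), zero_add] at hprev
      rw [if_neg (not_not_intro h2), if_neg h3, add_zero, zero_add]
      exact hprev
    · rw [if_pos hmem, add_comm (1:ℝ)] at hprev
      have hsum0 : ∑ k ∈ Finset.Icc 1 n, (if FR x (t.drop (n - k)) then (1:ℝ) else 0) = 0 := by
        linarith
      rw [hsum0, zero_add]
      by_cases hyx : y = x
      · subst hyx
        rw [if_neg (not_not_intro (List.mem_cons_self)), if_pos (hfr.2 ⟨rfl, hmem⟩)]
        norm_num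
      · have h4 : x ∉ y :: t.dropLast := by
          simp only [List.mem_cons]; push_neg; exact ⟨Ne.symm hyx, hmem⟩
        rw [if_pos h4, if_neg (by rw [hfr]; tauto)]
        norm_num

lemma drop_glue {x : V} {k n : ℕ} {l₁ l₂ : List V} (h₂ : l₂ ∈ paths N x (n - k))
    (hkn : k ≤ n) : (l₂.dropLast ++ l₁).drop (n - k) = l₁ := by
  have : l₂.dropLast.length = n - k := by
    rcases paths_shape N h₂ with ⟨t, rfl, hlen⟩
    simp [hlen]
  rw [← this, List.drop_left]

lemma decomp (x : V) {n : ℕ} (hn : 1 ≤ n) (H : List V → ℝ) :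
    ∑ l ∈ paths N x n, H l
      = (∑ l ∈ paths N x n, if x ∉ l.dropLast then H l else 0)
        + ∑ k ∈ Finset.Icc 1 n, ∑ l₁ ∈ paths N x k,
            (if FR x l₁ then ∑ l₂ ∈ paths N x (n - k), H (l₂.dropLast ++ l₁) else 0) := by
  have key : ∀ l ∈ paths N x n, H l = (if x ∉ l.dropLast then H l else 0)
      + ∑ k ∈ Finset.Icc 1 n, (if FR x (l.drop (n - k)) then H l else 0) := by
    intro l hl
    have hpart := fr_partition N x n hn l hl
    calc H l = ((if x ∉ l.dropLast then (1:ℝ) else 0)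
        + ∑ k ∈ Finset.Icc 1 n, (if FR x (l.drop (n - k)) then (1:ℝ) else 0)) * H l := by
          rw [hpart, one_mul]
      _ = _ := by
          rw [add_mul, Finset.sum_mul]
          congr 1
          · by_cases hc : x ∉ l.dropLast <;> simp [hc]
          · exact Finset.sum_congr rfl (fun k _ => by
              by_cases hc : FR x (l.drop (n - k)) <;> simp [hc])
  rw [Finset.sum_congr rfl key, Finset.sum_add_distrib]
  congr 1
  rw [Finset.sum_comm]
  refine Finset.sum_congr rfl (fun k hk => ?_)
  have hkn : k ≤ n := (Finset.mem_Icc.1 hk).2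
  rw [chop N x k n hkn]
  refine Finset.sum_congr rfl (fun l₁ h₁ => ?_)
  by_cases hfr : FR x l₁
  · rw [if_pos hfr, hfr.1]
    exact Finset.sum_congr rfl (fun l₂ h₂ => by rw [drop_glue N h₂ hkn, if_pos hfr])
  · rw [if_neg hfr]
    exact Finset.sum_eq_zero (fun l₂ h₂ => by rw [drop_glue N h₂ hkn, if_neg hfr])


lemma sum_glue_wt {l₁ : List V} (h₁ : l₁ ≠ []) (j : ℕ) :
    ∑ l₂ ∈ paths N l₁.headI j, wt N.p (l₂.dropLast ++ l₁) = wt N.p l₁ := by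
  rw [Finset.sum_congr rfl (fun l₂ h₂ => wt_glue N N.p h₂ h₁ rfl), ← Finset.sum_mul,
    sum_paths_wt_p, one_mul]

lemma headI_mem_dropLast {x : V} {n : ℕ} {l : List V} (hl : l ∈ paths N x n) (hn : 1 ≤ n) :
    l.headI ∈ l.dropLast := by
  rcases paths_shape N hl with ⟨t, rfl, hlen⟩
  have htne : t ≠ [] := by
    intro h; rw [h] at hlen; simp at hlen; omega
  rw [List.dropLast_concat]
  cases t with
  | nil => exact absurd rfl htne
  | cons a s => exact List.mem_cons_self

lemma not_mem_glue {x o : V} {j : ℕ} {l₁ l₂ : List V} (h₂ : l₂ ∈ paths N x j)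
    (h₁ : l₁ ≠ []) (hh : l₁.headI = x) :
    o ∉ l₂.dropLast ++ l₁ ↔ (o ∉ l₂ ∧ o ∉ l₁) := by
  have hx : x ∈ l₁ := hh ▸ headI_mem h₁
  rcases paths_shape N h₂ with ⟨t, rfl, hlen⟩
  rw [List.dropLast_concat]
  simp only [List.mem_append, List.mem_singleton]
  constructor
  · intro hno
    push_neg at hno
    refine ⟨?_, hno.2⟩
    push_neg
    exact ⟨hno.1, fun ho => (hno.2 (ho ▸ hx)).elim⟩
  · intro ⟨h1, h2⟩
    push_neg at h1 ⊢
    exact ⟨h1.1, h2⟩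

section Quantities

variable (x o : V)

noncomputable def Bq (n : ℕ) : ℝ := ∑ l ∈ paths N x n, if o ∉ l then wt N.p l else 0
noncomputable def Dq (n : ℕ) : ℝ :=
  ∑ l ∈ paths N x n, if o ∉ l ∧ x ∉ l.dropLast then wt N.p l else 0
noncomputable def ddq (n : ℕ) : ℝ := ∑ l ∈ paths N x n, if x ∉ l.dropLast then wt N.p l else 0
noncomputable def fq (k : ℕ) : ℝ := ∑ l ∈ paths N x k, if FR x l then wt N.p l else 0
noncomputable def Fq (k : ℕ) : ℝ :=
  ∑ l ∈ paths N x k, if FR x l ∧ o ∉ l then wt N.p l else 0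
noncomputable def uq (n : ℕ) : ℝ := ∑ l ∈ paths N x n, if l.headI = x then wt N.p l else 0

variable {x o}

lemma sum_ite_nonneg {s : Finset (List V)} {Q : List V → Prop} [DecidablePred Q] :
    0 ≤ ∑ l ∈ s, if Q l then wt N.p l else 0 :=
  Finset.sum_nonneg (fun l _ => by
    by_cases hq : Q l <;> simp [hq, wt_nonneg (p_nonneg N) l])

lemma sum_ite_le_one {n : ℕ} {Q : List V → Prop} [DecidablePred Q] :
    ∑ l ∈ paths N x n, (if Q l then wt N.p l else 0) ≤ 1 := by
  calc ∑ l ∈ paths N x n, (if Q l then wt N.p l else 0)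
      ≤ ∑ l ∈ paths N x n, wt N.p l :=
        Finset.sum_le_sum (fun l _ => by
          by_cases hq : Q l <;> simp [hq, wt_nonneg (p_nonneg N) l])
    _ = 1 := sum_paths_wt_p N x n

lemma Bq_nonneg (n : ℕ) : 0 ≤ Bq N x o n := by unfold Bq; exact sum_ite_nonneg N
lemma Dq_nonneg (n : ℕ) : 0 ≤ Dq N x o n := by unfold Dq; exact sum_ite_nonneg N
lemma ddq_nonneg (n : ℕ) : 0 ≤ ddq N x n := by unfold ddq; exact sum_ite_nonneg N
lemma fq_nonneg (k : ℕ) : 0 ≤ fq N x k := by unfold fq; exact sum_ite_nonneg N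
lemma Fq_nonneg (k : ℕ) : 0 ≤ Fq N x o k := by unfold Fq; exact sum_ite_nonneg N
lemma uq_nonneg (n : ℕ) : 0 ≤ uq N x n := by unfold uq; exact sum_ite_nonneg N
lemma Bq_le_one (n : ℕ) : Bq N x o n ≤ 1 := by unfold Bq; exact sum_ite_le_one N
lemma uq_le_one (n : ℕ) : uq N x n ≤ 1 := by unfold uq; exact sum_ite_le_one N
lemma Fq_le_fq (k : ℕ) : Fq N x o k ≤ fq N x k := by
  unfold Fq fq
  refine Finset.sum_le_sum (fun l _ => ?_)
  by_cases h1 : FR x l ∧ o ∉ l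
  · rw [if_pos h1, if_pos h1.1]
  · rw [if_neg h1]
    by_cases h2 : FR x l <;> simp [h2, wt_nonneg (p_nonneg N) l]

lemma uq_zero : uq N x 0 = 1 := by simp [uq, paths, wt]

lemma Bq_zero (hox : o ≠ x) : Bq N x o 0 = 1 := by
  simp [Bq, paths, wt, hox]

lemma mono_step {Q : List V → Prop} [DecidablePred Q] (hQ : ∀ y l, Q (y :: l) → Q l) (n : ℕ) :
    ∑ l ∈ paths N x (n+1), (if Q l then wt N.p l else 0)
      ≤ ∑ l ∈ paths N x n, (if Q l then wt N.p l else 0) := by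
  rw [sum_paths_succ]
  refine Finset.sum_le_sum (fun l hl => ?_)
  have hlne := paths_ne_nil N hl
  calc ∑ y ∈ csupp N l.headI, (if Q (y :: l) then wt N.p (y :: l) else 0)
      ≤ ∑ y ∈ csupp N l.headI, (if Q l then wt N.p (y :: l) else 0) := by
        refine Finset.sum_le_sum (fun y _ => ?_)
        by_cases h1 : Q (y :: l)
        · rw [if_pos h1, if_pos (hQ _ _ h1)]
        · rw [if_neg h1]
          by_cases h2 : Q l
          · rw [if_pos h2]; exact wt_nonneg (p_nonneg N) _
          · rw [if_neg h2]
    _ = if Q l then wt N.p l else 0 := by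
        by_cases h2 : Q l
        · simp only [h2, if_true]
          rw [Finset.sum_congr rfl (fun y _ => wt_cons N.p hlne y), ← Finset.mul_sum,
            sum_p, mul_one]
        · simp [h2]

lemma Bq_antitone : Antitone (Bq N x o) := by
  refine antitone_nat_of_succ_le (fun n => ?_)
  unfold Bq
  exact mono_step N (Q := fun l => o ∉ l) (fun y l h hc => h (List.mem_cons_of_mem _ hc)) n

lemma ddq_antitone : Antitone (ddq N x) := by
  refine antitone_nat_of_succ_le (fun n => ?_)
  unfold ddq
  refine mono_step N (Q := fun l => x ∉ l.dropLast) (fun y l h => ?_) n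
  intro hc
  rcases List.eq_nil_or_concat l with rfl | ⟨t, a, rfl⟩
  · simp at hc
  · rw [List.concat_eq_append] at h hc
    rw [show y :: (t ++ [a]) = (y :: t) ++ [a] by simp, List.dropLast_concat] at h
    rw [List.dropLast_concat] at hc
    exact h (List.mem_cons_of_mem _ hc)

lemma id1 {n : ℕ} (hn : 1 ≤ n) : (1:ℝ) = ddq N x n + ∑ k ∈ Finset.Icc 1 n, fq N x k := by
  have := decomp N x hn (wt N.p)
  rw [sum_paths_wt_p] at this
  rw [this]
  congr 1
  refine Finset.sum_congr rfl (fun k hk => ?_)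
  refine Finset.sum_congr rfl (fun l₁ h₁ => ?_)
  by_cases hfr : FR x l₁
  · rw [if_pos hfr, if_pos hfr, ← hfr.1, sum_glue_wt N (paths_ne_nil N h₁)]
  · rw [if_neg hfr, if_neg hfr]

lemma id2 {n : ℕ} (hn : 1 ≤ n) :
    uq N x n = ∑ k ∈ Finset.Icc 1 n, fq N x k * uq N x (n - k) := by
  have := decomp N x hn (fun l => if l.headI = x then wt N.p l else 0)
  rw [show uq N x n = ∑ l ∈ paths N x n, (if l.headI = x then wt N.p l else 0) from rfl, this]
  have hfirst : (∑ l ∈ paths N x n,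
      if x ∉ l.dropLast then (if l.headI = x then wt N.p l else 0) else 0) = 0 := by
    refine Finset.sum_eq_zero (fun l hl => ?_)
    by_cases h1 : x ∉ l.dropLast
    · rw [if_pos h1]
      by_cases h2 : l.headI = x
      · exact absurd (h2 ▸ headI_mem_dropLast N hl hn) h1
      · rw [if_neg h2]
    · rw [if_neg h1]
  rw [hfirst, zero_add]
  refine Finset.sum_congr rfl (fun k hk => ?_)
  rw [mul_comm (fq N x k) (uq N x (n - k)),
    show fq N x k = ∑ l₁ ∈ paths N x k, (if FR x l₁ then wt N.p l₁ else 0) from rfl,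
    Finset.mul_sum]
  refine Finset.sum_congr rfl (fun l₁ h₁ => ?_)
  by_cases hfr : FR x l₁
  · rw [if_pos hfr, if_pos hfr]
    have h₁ne := paths_ne_nil N h₁
    calc ∑ l₂ ∈ paths N x (n - k),
          (if (l₂.dropLast ++ l₁).headI = x then wt N.p (l₂.dropLast ++ l₁) else 0)
        = ∑ l₂ ∈ paths N x (n - k), (if l₂.headI = x then wt N.p l₂ else 0) * wt N.p l₁ := by
          refine Finset.sum_congr rfl (fun l₂ h₂ => ?_)
          rw [glue_headI N h₂ hfr.1, wt_glue N N.p h₂ h₁ne hfr.1,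
            ite_mul, zero_mul]
    _ = uq N x (n - k) * wt N.p l₁ := by
          rw [← Finset.sum_mul]
          rfl
  · rw [if_neg hfr, if_neg hfr, mul_zero]

lemma id3 {n : ℕ} (hn : 1 ≤ n) :
    Bq N x o n = Dq N x o n + ∑ k ∈ Finset.Icc 1 n, Fq N x o k * Bq N x o (n - k) := by
  have := decomp N x hn (fun l => if o ∉ l then wt N.p l else 0)
  rw [show Bq N x o n = ∑ l ∈ paths N x n, (if o ∉ l then wt N.p l else 0) from rfl, this]
  congr 1
  · refine Finset.sum_congr rfl (fun l hl => ?_)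
    by_cases h1 : o ∉ l <;> by_cases h2 : x ∉ l.dropLast <;> simp [Dq, h1, h2]
  · refine Finset.sum_congr rfl (fun k hk => ?_)
    rw [mul_comm (Fq N x o k) (Bq N x o (n - k)),
      show Fq N x o k = ∑ l₁ ∈ paths N x k, (if FR x l₁ ∧ o ∉ l₁ then wt N.p l₁ else 0) from rfl,
      Finset.mul_sum]
    refine Finset.sum_congr rfl (fun l₁ h₁ => ?_)
    by_cases hfr : FR x l₁
    · rw [if_pos hfr]
      have h₁ne := paths_ne_nil N h₁
      have key : ∀ l₂ ∈ paths N x (n - k),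
          (if o ∉ l₂.dropLast ++ l₁ then wt N.p (l₂.dropLast ++ l₁) else 0)
            = (if o ∉ l₂ ∧ o ∉ l₁ then wt N.p l₂ * wt N.p l₁ else 0) := by
        intro l₂ h₂
        rw [wt_glue N N.p h₂ h₁ne hfr.1]
        by_cases hno : o ∉ l₂.dropLast ++ l₁
        · rw [if_pos hno, if_pos ((not_mem_glue N h₂ h₁ne hfr.1).1 hno)]
        · rw [if_neg hno, if_neg (fun hc =>
            hno ((not_mem_glue N h₂ h₁ne hfr.1).2 hc))]
      rw [Finset.sum_congr rfl key]
      by_cases ho₁ : o ∉ l₁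
      · have heach : ∀ l₂ ∈ paths N x (n - k),
            (if o ∉ l₂ ∧ o ∉ l₁ then wt N.p l₂ * wt N.p l₁ else 0)
              = (if o ∉ l₂ then wt N.p l₂ else 0) * wt N.p l₁ := by
          intro l₂ _
          by_cases h2 : o ∉ l₂ <;> simp [h2, ho₁]
        rw [Finset.sum_congr rfl heach, ← Finset.sum_mul, if_pos ⟨hfr, ho₁⟩]
        rfl
      · rw [Finset.sum_eq_zero (fun l₂ _ => if_neg (fun hc => ho₁ hc.2)),
          if_neg (fun hc => ho₁ hc.2), mul_zero]
    · rw [if_neg hfr, if_neg (fun hc => hfr hc.1), mul_zero]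


lemma drop_headI_mem_dropLast :
    ∀ (γ : List V) (j : ℕ), j + 1 < γ.length → (γ.drop j).headI ∈ γ.dropLast := by
  intro γ
  induction γ with
  | nil => intro j hj; simp at hj
  | cons a t ih =>
    intro j hj
    have htne : t ≠ [] := by
      intro h; subst h; simp at hj
    rw [List.dropLast_cons_of_ne_nil htne]
    cases j with
    | zero => exact List.mem_cons_self
    | succ j =>
      rw [List.drop_succ_cons]
      exact List.mem_cons_of_mem _ (ih j (by simpa using Nat.lt_of_succ_lt_succ hj))

lemma Fq_chop {k n : ℕ} (hkn : k ≤ n) :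
    ∑ l ∈ paths N x n,
        (if FR x (l.drop (n - k)) ∧ o ∉ l.drop (n - k) then wt N.p l else 0)
      = Fq N x o k := by
  rw [chop N x k n hkn
    (fun l => if FR x (l.drop (n - k)) ∧ o ∉ l.drop (n - k) then wt N.p l else 0)]
  refine Finset.sum_congr rfl (fun l₁ h₁ => ?_)
  have h₁ne := paths_ne_nil N h₁
  calc ∑ l₂ ∈ paths N l₁.headI (n - k),
        (if FR x ((l₂.dropLast ++ l₁).drop (n - k)) ∧ o ∉ (l₂.dropLast ++ l₁).drop (n - k)
          then wt N.p (l₂.dropLast ++ l₁) else 0)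
      = ∑ l₂ ∈ paths N l₁.headI (n - k),
          (if FR x l₁ ∧ o ∉ l₁ then wt N.p (l₂.dropLast ++ l₁) else 0) := by
        refine Finset.sum_congr rfl (fun l₂ h₂ => ?_)
        rw [drop_glue N h₂ hkn]
    _ = if FR x l₁ ∧ o ∉ l₁ then wt N.p l₁ else 0 := by
        by_cases hc : FR x l₁ ∧ o ∉ l₁
        · simp only [hc, if_true]
          exact sum_glue_wt N h₁ne _
        · simp [hc]

lemma follow_chop {m n : ℕ} {γ : List V} (hγ : γ ∈ paths N x m) (hmn : m ≤ n) :
    ∑ l ∈ paths N x n, (if l.drop (n - m) = γ then wt N.p l else 0) = wt N.p γ := by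
  rw [chop N x m n hmn (fun l => if l.drop (n - m) = γ then wt N.p l else 0)]
  have : ∀ l₁ ∈ paths N x m,
      (∑ l₂ ∈ paths N l₁.headI (n - m),
        (if (l₂.dropLast ++ l₁).drop (n - m) = γ then wt N.p (l₂.dropLast ++ l₁) else 0))
        = if l₁ = γ then wt N.p l₁ else 0 := by
    intro l₁ h₁
    have h₁ne := paths_ne_nil N h₁
    calc ∑ l₂ ∈ paths N l₁.headI (n - m),
          (if (l₂.dropLast ++ l₁).drop (n - m) = γ then wt N.p (l₂.dropLast ++ l₁) else 0)
        = ∑ l₂ ∈ paths N l₁.headI (n - m), (if l₁ = γ then wt N.p (l₂.dropLast ++ l₁) else 0) := by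
          refine Finset.sum_congr rfl (fun l₂ h₂ => ?_)
          rw [drop_glue N h₂ hmn]
      _ = if l₁ = γ then wt N.p l₁ else 0 := by
          by_cases hc : l₁ = γ
          · subst hc
            simp only [eq_self_iff_true, if_true]
            exact sum_glue_wt N h₁ne _
          · simp [hc]
  rw [Finset.sum_congr rfl this, Finset.sum_ite_eq' (paths N x m) γ (fun l => wt N.p l),
    if_pos hγ]

lemma exists_gamma (hox : o ≠ x) :
    ∃ m : ℕ, ∃ γ : List V, γ ∈ paths N x m ∧ γ.headI = o ∧ x ∉ γ.dropLast ∧ 0 < wt N.p γ := by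
  have main : ∀ b : V, Relation.ReflTransGen (fun a b => 0 < N.c a b) x b →
      b = x ∨ ∃ m : ℕ, ∃ γ : List V,
        γ ∈ paths N x m ∧ γ.headI = b ∧ x ∉ γ.dropLast ∧ 0 < wt N.p γ := by
    intro b hb
    induction hb with
    | refl => exact Or.inl rfl
    | @tail b' c hab hbc ih =>
      by_cases hcx : c = x
      · exact Or.inl hcx
      · right
        rcases ih with hbx | ⟨m, γ, hγ, hhead, hdl, hwt⟩
        · subst hbx
          refine ⟨1, [c, b'], ?_, rfl, ?_, ?_⟩
          · rw [mem_paths_succ]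
            exact ⟨[b'], by simp [paths], c, by simpa [mem_csupp] using hbc, rfl⟩
          · simpa using fun h => hcx h.symm
          · have : N.p b' c > 0 := div_pos hbc (cTot_pos N b')
            simpa [wt] using this
        · have hγne := paths_ne_nil N hγ
          refine ⟨m + 1, c :: γ, ?_, rfl, ?_, ?_⟩
          · rw [mem_paths_succ]
            exact ⟨γ, hγ, c, by simpa [mem_csupp, hhead] using hbc, rfl⟩
          · rw [List.dropLast_cons_of_ne_nil hγne]
            simp only [List.mem_cons]
            push_neg
            exact ⟨Ne.symm hcx, hdl⟩
          · rw [wt_cons N.p hγne]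
            have : 0 < N.p γ.headI c := by
              rw [hhead]; exact div_pos hbc (cTot_pos N b')
            positivity
  rcases main o (N.conn x o) with h | h
  · exact absurd h hox
  · exact h

lemma F_gamma_bound {γ : List V} {m : ℕ} (hγ : γ ∈ paths N x m) (hho : γ.headI = o)
    (hxdl : x ∉ γ.dropLast) (hox : o ≠ x) {n : ℕ} (hn : 1 ≤ n) (hmn : m ≤ n) :
    (∑ k ∈ Finset.Icc 1 n, Fq N x o k) + wt N.p γ ≤ 1 := by
  rw [Finset.sum_congr rfl (fun k hk => (Fq_chop N (le_trans (Finset.mem_Icc.1 hk).2 le_rfl)).symm),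
    ← follow_chop N hγ hmn, Finset.sum_comm, ← Finset.sum_add_distrib,
    ← sum_paths_wt_p N x n]
  refine Finset.sum_le_sum (fun l hl => ?_)
  set W := wt N.p l with hW
  have hW0 : 0 ≤ W := wt_nonneg (p_nonneg N) l
  have hpart := fr_partition N x n hn l hl
  have hfr_le : ∑ k ∈ Finset.Icc 1 n, (if FR x (l.drop (n - k)) then (1:ℝ) else 0) ≤ 1 := by
    have h0 : (0:ℝ) ≤ if x ∉ l.dropLast then (1:ℝ) else 0 := by split <;> norm_num
    linarith
  by_cases hfol : l.drop (n - m) = γ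
  · have hzero : ∀ k ∈ Finset.Icc 1 n,
        (if FR x (l.drop (n - k)) ∧ o ∉ l.drop (n - k) then W else 0) = 0 := by
      intro k hk
      rcases Finset.mem_Icc.1 hk with ⟨hk1, hk2⟩
      rw [if_neg]
      intro ⟨hfr, hno⟩
      by_cases hkm : k ≤ m
      · have hdd : l.drop (n - k) = γ.drop (m - k) := by
          rw [← hfol, List.drop_drop]
          congr 1
          omega
        rcases eq_or_lt_of_le hkm with rfl | hklt
        · rw [hdd, Nat.sub_self, List.drop_zero] at hfr
          exact hox (hho ▸ hfr.1.symm ▸ rfl)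
        · have hlen := paths_length N hγ
          have hmem : (γ.drop (m - k)).headI ∈ γ.dropLast :=
            drop_headI_mem_dropLast (γ) (m - k) (by omega)
          rw [hdd] at hfr
          exact hxdl (hfr.1 ▸ hmem)
      · push_neg at hkm
        have hsub : l.drop (n - m) ⊆ l.drop (n - k) := by
          rw [show n - m = (n - k) + (k - m) by omega, ← List.drop_drop]
          exact List.drop_subset _ _
        have : o ∈ l.drop (n - k) := hsub (hfol ▸ (hho ▸ headI_mem (paths_ne_nil N hγ)))
        exact hno this
    rw [Finset.sum_congr rfl hzero, Finset.sum_const, smul_zero, zero_add, if_pos hfol]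
  · rw [if_neg hfol, add_zero]
    calc ∑ k ∈ Finset.Icc 1 n, (if FR x (l.drop (n - k)) ∧ o ∉ l.drop (n - k) then W else 0)
        ≤ ∑ k ∈ Finset.Icc 1 n, (if FR x (l.drop (n - k)) then W else 0) := by
          refine Finset.sum_le_sum (fun k _ => ?_)
          by_cases h1 : FR x (l.drop (n - k)) ∧ o ∉ l.drop (n - k)
          · rw [if_pos h1, if_pos h1.1]
          · rw [if_neg h1]
            split
            exacts [hW0, le_rfl]
      _ = (∑ k ∈ Finset.Icc 1 n, (if FR x (l.drop (n - k)) then (1:ℝ) else 0)) * W := by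
          rw [Finset.sum_mul]
          refine Finset.sum_congr rfl (fun k _ => ?_)
          split <;> simp
      _ ≤ W := mul_le_of_le_one_left hW0 hfr_le

end Quantities


lemma pstep_path (x : V) : ∀ n y, N.pstep n x y
    = ∑ l ∈ paths N x n, (if l.headI = y then wt N.p l else 0) := by
  intro n
  induction n with
  | zero =>
    intro y
    show (if x = y then (1:ℝ) else 0) = _
    by_cases hxy : x = y <;> simp [paths, wt, hxy]
  | succ n ih =>
    intro y
    show (∑' z, N.pstep n x z * N.p z y) = _
    classical
    set Z := (paths N x n).image List.headI with hZ
    have hsupp : ∀ z ∉ Z, N.pstep n x z * N.p z y = 0 := by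
      intro z hz
      have : N.pstep n x z = 0 := by
        rw [ih z]
        refine Finset.sum_eq_zero (fun l hl => ?_)
        rw [if_neg (fun hc => hz (hZ ▸ Finset.mem_image.2 ⟨l, hl, hc⟩))]
      rw [this, zero_mul]
    rw [tsum_eq_sum hsupp]
    have step2 : ∀ l ∈ paths N x n,
        ∑ y' ∈ csupp N l.headI, (if (y' :: l).headI = y then wt N.p (y' :: l) else 0)
          = wt N.p l * N.p l.headI y := by
      intro l hl
      have hlne := paths_ne_nil N hl
      have : ∀ y' ∈ csupp N l.headI,
          (if (y' :: l).headI = y then wt N.p (y' :: l) else 0)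
            = (if y' = y then wt N.p l * N.p l.headI y' else 0) := by
        intro y' _
        rw [wt_cons N.p hlne]
        rfl
      rw [Finset.sum_congr rfl this,
        Finset.sum_ite_eq' (csupp N l.headI) y (fun y' => wt N.p l * N.p l.headI y')]
      by_cases hy : y ∈ csupp N l.headI
      · rw [if_pos hy]
      · rw [if_neg hy, p_eq_zero_of_not_mem N hy, mul_zero]
    rw [sum_paths_succ, Finset.sum_congr rfl step2]
    calc ∑ z ∈ Z, N.pstep n x z * N.p z y
        = ∑ z ∈ Z, ∑ l ∈ paths N x n, (if l.headI = z then wt N.p l * N.p z y else 0) := by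
          refine Finset.sum_congr rfl (fun z _ => ?_)
          rw [ih z, Finset.sum_mul]
          exact Finset.sum_congr rfl (fun l _ => by rw [ite_mul, zero_mul])
      _ = ∑ l ∈ paths N x n, ∑ z ∈ Z, (if l.headI = z then wt N.p l * N.p z y else 0) :=
          Finset.sum_comm
      _ = ∑ l ∈ paths N x n, wt N.p l * N.p l.headI y := by
          refine Finset.sum_congr rfl (fun l hl => ?_)
          rw [Finset.sum_ite_eq Z l.headI (fun z => wt N.p l * N.p z y),
            if_pos (Finset.mem_image.2 ⟨l, hl, rfl⟩)]

lemma uq_eq_pstep (x : V) (n : ℕ) : uq N x n = N.pstep n x x := (pstep_path N x n x).symm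


lemma ddq_zero (x : V) : ddq N x 0 = 1 := by simp [ddq, paths, wt]

lemma ddq_le_one (x : V) (n : ℕ) : ddq N x n ≤ 1 := by unfold ddq; exact sum_ite_le_one N

lemma Dq_le_ddq (x o : V) (n : ℕ) : Dq N x o n ≤ ddq N x n := by
  unfold Dq ddq
  refine Finset.sum_le_sum (fun l _ => ?_)
  by_cases h1 : o ∉ l ∧ x ∉ l.dropLast
  · rw [if_pos h1, if_pos h1.2]
  · rw [if_neg h1]
    split
    exacts [wt_nonneg (p_nonneg N) l, le_rfl]

lemma ddq_tendsto_zero (x : V) (hrecx : ¬ Summable (fun n => N.pstep n x x)) :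
    Tendsto (ddq N x) atTop (nhds 0) := by
  have key : ∀ ε : ℝ, 0 < ε → ∃ n, ddq N x n < ε := by
    intro ε hε
    by_contra hcon
    push_neg at hcon
    have hε1 : ε ≤ 1 := le_trans (hcon 0) (le_of_eq (ddq_zero N x))
    set u := fun n => uq N x n with hu
    have hub : ∀ NN : ℕ, ∑ i ∈ Finset.range (NN + 1), u i ≤ 1 / ε := by
      intro NN
      set S := ∑ i ∈ Finset.range (NN + 1), u i with hS
      have hS0 : 0 ≤ S := Finset.sum_nonneg (fun i _ => uq_nonneg N i)
      have hsplit : S = u 0 + ∑ n ∈ Finset.Icc 1 NN, u n := by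
        rw [hS, Finset.range_eq_Ico,
          show Finset.Ico 0 (NN + 1) = insert 0 (Finset.Icc 1 NN) by ext j; simp; omega,
          Finset.sum_insert (by simp)]
      have hrw : ∀ n ∈ Finset.Icc 1 NN, u n
          = ∑ k ∈ Finset.Icc 1 NN, (if k ≤ n then fq N x k * u (n - k) else 0) := by
        intro n hn
        rcases Finset.mem_Icc.1 hn with ⟨hn1, hn2⟩
        show uq N x n = _
        rw [id2 N hn1]
        rw [← Finset.sum_subset (Finset.Icc_subset_Icc_right hn2 : Finset.Icc 1 n ⊆ Finset.Icc 1 NN)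
          (fun k hk hk' => if_neg (fun hc => hk' (Finset.mem_Icc.2
            ⟨(Finset.mem_Icc.1 hk).1, hc⟩)))]
        refine Finset.sum_congr rfl (fun k hk => ?_)
        rw [if_pos (Finset.mem_Icc.1 hk).2]
      have hinner : ∀ k ∈ Finset.Icc 1 NN,
          ∑ n ∈ Finset.Icc 1 NN, (if k ≤ n then fq N x k * u (n - k) else 0)
            ≤ fq N x k * S := by
        intro k hk
        rcases Finset.mem_Icc.1 hk with ⟨hk1, hk2⟩
        have h1 : ∑ n ∈ Finset.Icc 1 NN, (if k ≤ n then fq N x k * u (n - k) else 0)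
            = ∑ n ∈ Finset.Icc k NN, fq N x k * u (n - k) := by
          rw [← Finset.sum_filter]
          congr 1
          ext j
          simp only [Finset.mem_filter, Finset.mem_Icc]
          omega
        have h2 : ∑ n ∈ Finset.Icc k NN, u (n - k) ≤ S := by
          have hinj : Set.InjOn (· - k) (Finset.Icc k NN) := by
            intro a ha b hb hab
            simp only [Finset.coe_Icc, Set.mem_Icc] at ha hb
            simp only at hab
            omega
          have h3 : ∑ n ∈ Finset.Icc k NN, u (n - k)
              = ∑ j ∈ (Finset.Icc k NN).image (· - k), u j :=
            (Finset.sum_image (fun a ha b hb hab => hinj ha hb hab)).symm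
          rw [h3, hS]
          refine Finset.sum_le_sum_of_subset_of_nonneg ?_ (fun i _ _ => uq_nonneg N i)
          intro j hj
          rcases Finset.mem_image.1 hj with ⟨a, ha, rfl⟩
          simp only [Finset.mem_Icc, Finset.mem_range] at *
          omega
        rw [h1, ← Finset.mul_sum]
        exact mul_le_mul_of_nonneg_left h2 (fq_nonneg N k)
      rcases Nat.eq_zero_or_pos NN with rfl | hNN
      · have : S = 1 := by rw [hsplit]; simp [hu, uq_zero]
        rw [this]
        rw [le_div_iff₀ hε]
        linarith
      · have hfs : ∑ k ∈ Finset.Icc 1 NN, fq N x k ≤ 1 - ε := by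
          have := id1 N (x := x) hNN
          have h2 := hcon NN
          linarith
        have hS1 : S ≤ 1 + (1 - ε) * S := by
          have h4 : ∑ n ∈ Finset.Icc 1 NN, u n
              ≤ ∑ k ∈ Finset.Icc 1 NN, fq N x k * S := by
            rw [Finset.sum_congr rfl hrw, Finset.sum_comm]
            exact Finset.sum_le_sum hinner
          have h5 : ∑ k ∈ Finset.Icc 1 NN, fq N x k * S
              ≤ (1 - ε) * S := by
            rw [← Finset.sum_mul]
            exact mul_le_mul_of_nonneg_right hfs hS0
          have h6 : u 0 = 1 := uq_zero N
          linarith [hsplit]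
        rw [le_div_iff₀ hε]
        nlinarith
    have : Summable u := by
      refine summable_of_sum_range_le (c := 1 / ε) (fun n => uq_nonneg N n) (fun n => ?_)
      calc ∑ i ∈ Finset.range n, u i ≤ ∑ i ∈ Finset.range (n + 1), u i := by
            rw [Finset.sum_range_succ]
            have := uq_nonneg N (x := x) n
            linarith
        _ ≤ 1 / ε := hub n
    exact hrecx (by rwa [show u = fun n => N.pstep n x x from funext (uq_eq_pstep N x)] at this)
  rw [Metric.tendsto_atTop]
  intro ε hε
  rcases key ε hε with ⟨n₀, hn₀⟩
  refine ⟨n₀, fun n hn => ?_⟩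
  rw [Real.dist_eq, sub_zero, abs_of_nonneg (ddq_nonneg N n)]
  exact lt_of_le_of_lt (ddq_antitone N hn) hn₀

lemma Bq_tendsto_zero (x o : V) (hrecx : ¬ Summable (fun n => N.pstep n x x))
    (hox : o ≠ x) : Tendsto (Bq N x o) atTop (nhds 0) := by
  obtain ⟨m, γ, hγ, hho, hxdl, hwγ⟩ := exists_gamma N (x := x) hox
  set β := ⨅ n, Bq N x o n with hβdef
  have hbdd : BddBelow (Set.range (Bq N x o)) := by
    refine ⟨0, ?_⟩
    rintro _ ⟨n, rfl⟩
    exact Bq_nonneg N n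
  have hβ : Tendsto (Bq N x o) atTop (nhds β) := tendsto_atTop_ciInf (Bq_antitone N) hbdd
  have hβ0 : 0 ≤ β := le_ciInf (fun n => Bq_nonneg N n)
  set SF := fun n => ∑ k ∈ Finset.Icc 1 n, Fq N x o k with hSF
  have hSFmono : Monotone SF := by
    intro a b hab
    exact Finset.sum_le_sum_of_subset_of_nonneg (Finset.Icc_subset_Icc_right hab)
      (fun k _ _ => Fq_nonneg N k)
  have hSFb : ∀ n, SF n ≤ 1 - wt N.p γ := by
    intro n
    have h1 : SF n ≤ SF (n + m + 1) := hSFmono (by omega)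
    have h2 := F_gamma_bound N hγ hho hxdl hox
      (n := n + m + 1) (by omega) (by omega)
    rw [hSF]
    dsimp only
    linarith
  have hbddS : BddAbove (Set.range SF) := by
    refine ⟨1 - wt N.p γ, ?_⟩
    rintro _ ⟨n, rfl⟩
    exact hSFb n
  set q := ⨆ n, SF n with hqdef
  have hq : Tendsto SF atTop (nhds q) := tendsto_atTop_ciSup hSFmono hbddS
  have hqle : q ≤ 1 - wt N.p γ := ciSup_le hSFb
  have hD2 : Tendsto (fun n => Dq N x o (2 * n)) atTop (nhds 0) := by
    refine tendsto_of_tendsto_of_tendsto_of_le_of_le tendsto_const_nhds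
      (ddq_tendsto_zero N x hrecx) (fun n => Dq_nonneg N _) (fun n => ?_)
    exact le_trans (Dq_le_ddq N x o (2 * n)) (ddq_antitone N (by omega))
  have hB2 : Tendsto (fun n => Bq N x o (2 * n)) atTop (nhds β) := by
    refine tendsto_of_tendsto_of_tendsto_of_le_of_le tendsto_const_nhds hβ
      (fun n => ciInf_le hbdd (2 * n)) (fun n => Bq_antitone N (by omega))
  have hSF2 : Tendsto (fun n => SF (2 * n)) atTop (nhds q) := by
    refine tendsto_of_tendsto_of_tendsto_of_le_of_le hq tendsto_const_nhds
      (fun n => hSFmono (by omega)) (fun n => le_ciSup hbddS (2 * n))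
  have hkey : ∀ n, 1 ≤ n → Bq N x o (2 * n)
      ≤ Dq N x o (2 * n) + SF n * Bq N x o n + (SF (2 * n) - SF n) := by
    intro n hn
    have hid := id3 N (x := x) (o := o) (n := 2 * n) (by omega)
    have hdisj : Disjoint (Finset.Icc 1 n) (Finset.Icc (n + 1) (2 * n)) := by
      refine Finset.disjoint_left.2 (fun k hk hk' => ?_)
      simp only [Finset.mem_Icc] at *
      omega
    have hunion : Finset.Icc 1 n ∪ Finset.Icc (n + 1) (2 * n) = Finset.Icc 1 (2 * n) := by
      ext j
      simp only [Finset.mem_union, Finset.mem_Icc]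
      omega
    have hsplitIcc : ∑ k ∈ Finset.Icc 1 (2 * n), Fq N x o k * Bq N x o (2 * n - k)
        = (∑ k ∈ Finset.Icc 1 n, Fq N x o k * Bq N x o (2 * n - k))
          + ∑ k ∈ Finset.Icc (n + 1) (2 * n), Fq N x o k * Bq N x o (2 * n - k) := by
      rw [← hunion, Finset.sum_union hdisj]
    have hpart1 : ∑ k ∈ Finset.Icc 1 n, Fq N x o k * Bq N x o (2 * n - k)
        ≤ SF n * Bq N x o n := by
      rw [hSF]
      dsimp only
      rw [Finset.sum_mul]
      refine Finset.sum_le_sum (fun k hk => ?_)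
      have hk2 := (Finset.mem_Icc.1 hk).2
      exact mul_le_mul_of_nonneg_left (Bq_antitone N (by omega)) (Fq_nonneg N k)
    have hU : SF (2 * n) = SF n + ∑ k ∈ Finset.Icc (n + 1) (2 * n), Fq N x o k := by
      show (∑ k ∈ Finset.Icc 1 (2 * n), Fq N x o k) = _
      rw [← hunion, Finset.sum_union hdisj]
    have hpart2 : ∑ k ∈ Finset.Icc (n + 1) (2 * n), Fq N x o k * Bq N x o (2 * n - k)
        ≤ SF (2 * n) - SF n := by
      have h1 : ∑ k ∈ Finset.Icc (n + 1) (2 * n), Fq N x o k * Bq N x o (2 * n - k)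
          ≤ ∑ k ∈ Finset.Icc (n + 1) (2 * n), Fq N x o k :=
        Finset.sum_le_sum (fun k _ => by
          have := Bq_le_one N (x := x) (o := o) (2 * n - k)
          have := Fq_nonneg N (x := x) (o := o) k
          have := Bq_nonneg N (x := x) (o := o) (2 * n - k)
          nlinarith)
      linarith
    linarith
  have hβle : β ≤ 0 + q * β + (q - q) := by
    refine le_of_tendsto_of_tendsto hB2
      ((hD2.add (hq.mul hβ)).add (hSF2.sub hq)) ?_
    filter_upwards [eventually_ge_atTop 1] with n hn
    exact hkey n hn
  have : β ≤ q * β := by linarith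
  have hβzero : β = 0 := by nlinarith
  rwa [hβzero] at hβ


section HPart

variable {o : V} {h : V → ℝ}

lemma ph_nonneg (hpot : N.IsPotential o h) (x y : V) : 0 ≤ N.ph h x y := by
  exact div_nonneg (mul_nonneg (p_nonneg N x y) (hpot.1 y)) (hpot.1 x)

lemma sum_ph (hpot : N.IsPotential o h) {x : V} (hx : 0 < h x) :
    ∑ y ∈ csupp N x, N.ph h x y = 1 := by
  have hxo : x ≠ o := fun hc => by rw [hc, hpot.2.1] at hx; exact lt_irrefl 0 hx
  have hlap := hpot.2.2.2 x hxo
  rw [lap_eq] at hlap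
  have hsum : ∑ y ∈ csupp N x, N.c x y * h y = N.cTot x * h x := by
    have hexp : ∑ y ∈ csupp N x, N.c x y * (h y - h x)
        = (∑ y ∈ csupp N x, N.c x y * h y) - (∑ y ∈ csupp N x, N.c x y) * h x := by
      calc ∑ y ∈ csupp N x, N.c x y * (h y - h x)
          = ∑ y ∈ csupp N x, (N.c x y * h y - N.c x y * h x) :=
            Finset.sum_congr rfl (fun y _ => by ring)
        _ = (∑ y ∈ csupp N x, N.c x y * h y) - ∑ y ∈ csupp N x, N.c x y * h x :=
            Finset.sum_sub_distrib _ _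
        _ = _ := by rw [← Finset.sum_mul]
    rw [hexp] at hlap
    rw [← cTot_eq] at hlap
    linarith
  have : ∑ y ∈ csupp N x, N.ph h x y
      = (∑ y ∈ csupp N x, N.c x y * h y) / (N.cTot x * h x) := by
    rw [Finset.sum_div]
    refine Finset.sum_congr rfl (fun y _ => ?_)
    unfold Network.ph Network.p
    rw [div_mul_eq_mul_div, div_div]
  rw [this, hsum, div_self (ne_of_gt (mul_pos (cTot_pos N x) hx))]

variable {v : V}

lemma wt_ph_eq (hpot : N.IsPotential o h) (hv : 0 < h v) :
    ∀ {n : ℕ} {l : List V}, l ∈ paths N v n →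
      wt (N.ph h) l = if (∀ z ∈ l, 0 < h z) then h l.headI * wt N.p l / h v else 0 := by
  intro n
  induction n with
  | zero =>
    intro l hl
    simp only [paths, Finset.mem_singleton] at hl
    subst hl
    rw [if_pos (by simpa using hv)]
    show (1:ℝ) = h v * 1 / h v
    field_simp
  | succ n ih =>
    intro l hl
    rcases (mem_paths_succ N).1 hl with ⟨t, ht, y, hy, rfl⟩
    have htne := paths_ne_nil N ht
    rw [wt_cons _ htne, ih ht]
    by_cases hall : ∀ z ∈ t, 0 < h z
    · rw [if_pos hall]
      have hth : 0 < h t.headI := hall _ (headI_mem htne)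
      by_cases hhy : 0 < h y
      · rw [if_pos (by
          intro z hz
          rcases List.mem_cons.1 hz with rfl | hz'
          · exact hhy
          · exact hall _ hz')]
        show _ = h (y :: t).headI * wt N.p (y :: t) / h v
        rw [wt_cons _ htne]
        show _ * N.ph h t.headI y = _
        unfold Network.ph
        have hvne : h v ≠ 0 := ne_of_gt hv
        have hthne : h t.headI ≠ 0 := ne_of_gt hth
        show h t.headI * wt N.p t / h v * (N.p t.headI y * h y / h t.headI)
            = h y * (wt N.p t * N.p t.headI y) / h v
        field_simp
      · have hy0 : h y = 0 := le_antisymm (not_lt.1 hhy) (hpot.1 y)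
        rw [if_neg (by
          intro hc
          exact hhy (hc y (List.mem_cons_self)))]
        show h t.headI * wt N.p t / h v * N.ph h t.headI y = 0
        unfold Network.ph
        rw [hy0]
        ring
    · rw [if_neg hall, if_neg (by
        intro hc
        exact hall (fun z hz => hc z (List.mem_cons_of_mem _ hz))), zero_mul]

lemma wt_ph_nonneg (hpot : N.IsPotential o h) (l : List V) : 0 ≤ wt (N.ph h) l :=
  wt_nonneg (ph_nonneg N hpot) l

lemma sum_wt_ph (hpot : N.IsPotential o h) (hv : 0 < h v) :
    ∀ n : ℕ, ∑ l ∈ paths N v n, wt (N.ph h) l = 1 := by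
  intro n
  induction n with
  | zero => simp [paths, wt]
  | succ n ih =>
    rw [sum_paths_succ]
    calc ∑ l ∈ paths N v n, ∑ y ∈ csupp N l.headI, wt (N.ph h) (y :: l)
        = ∑ l ∈ paths N v n, wt (N.ph h) l := by
          refine Finset.sum_congr rfl (fun l hl => ?_)
          have hlne := paths_ne_nil N hl
          rw [Finset.sum_congr rfl (fun y _ => wt_cons (N.ph h) hlne y), ← Finset.mul_sum]
          by_cases hz : wt (N.ph h) l = 0
          · rw [hz, zero_mul]
          · have hall : ∀ z ∈ l, 0 < h z := by
              by_contra hc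
              exact hz (by rw [wt_ph_eq N hpot hv hl, if_neg hc])
            rw [sum_ph N hpot (hall _ (headI_mem hlne)), mul_one]
      _ = 1 := ih

lemma good_sum_lower (hpot : N.IsPotential o h) (hv : 0 < h v) {M : ℝ} (hM : 0 < M) (n : ℕ) :
    1 - M / h v * Bq N v o n
      ≤ ∑ l ∈ paths N v n, (if M < h l.headI then wt (N.ph h) l else 0) := by
  have hsplit : (∑ l ∈ paths N v n, (if M < h l.headI then wt (N.ph h) l else 0))
      + (∑ l ∈ paths N v n, (if ¬ M < h l.headI then wt (N.ph h) l else 0)) = 1 := by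
    rw [← Finset.sum_add_distrib, ← sum_wt_ph N hpot hv n]
    refine Finset.sum_congr rfl (fun l _ => ?_)
    by_cases hc : M < h l.headI <;> simp [hc]
  have hbad : (∑ l ∈ paths N v n, (if ¬ M < h l.headI then wt (N.ph h) l else 0))
      ≤ M / h v * Bq N v o n := by
    rw [show M / h v * Bq N v o n
        = ∑ l ∈ paths N v n, (M / h v * if o ∉ l then wt N.p l else 0) by
      rw [← Finset.mul_sum]; rfl]
    refine Finset.sum_le_sum (fun l hl => ?_)
    have hwtp : 0 ≤ wt N.p l := wt_nonneg (p_nonneg N) l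
    have hrhs0 : 0 ≤ M / h v * if o ∉ l then wt N.p l else 0 := by
      have : (0:ℝ) ≤ if o ∉ l then wt N.p l else 0 := by split; exacts [hwtp, le_rfl]
      positivity
    by_cases hc : M < h l.headI
    · rw [if_neg (not_not_intro hc)]
      exact hrhs0
    · rw [if_pos hc]
      rw [wt_ph_eq N hpot hv hl]
      by_cases hall : ∀ z ∈ l, 0 < h z
      · rw [if_pos hall]
        have hno : o ∉ l := fun hc' => by
          have := hall o hc'
          rw [hpot.2.1] at this
          exact lt_irrefl 0 this
        rw [if_pos hno, show M / h v * wt N.p l = M * wt N.p l / h v by ring]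
        gcongr
        exact not_lt.1 hc
      · rw [if_neg hall]
        exact hrhs0
  linarith

end HPart


lemma getD_last (x : V) : ∀ {n : ℕ} {l : List V}, l ∈ paths N x n → l.getD n x = x := by
  intro n
  induction n with
  | zero =>
    intro l hl
    simp only [paths, Finset.mem_singleton] at hl
    subst hl
    rfl
  | succ n ih =>
    intro l hl
    rcases (mem_paths_succ N).1 hl with ⟨t, ht, y, hy, rfl⟩
    show t.getD n x = x
    exact ih ht

lemma getD_zero_headI {l : List V} (hl : l ≠ []) (d : V) : l.getD 0 d = l.headI := by
  cases l with
  | nil => exact absurd rfl hl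
  | cons a t => rfl

lemma prod_getD (q : V → V → ℝ) (x : V) : ∀ {n : ℕ} {l : List V}, l ∈ paths N x n →
    ∏ i ∈ Finset.range n, q (l.getD (n - i) x) (l.getD (n - i - 1) x) = wt q l := by
  intro n
  induction n with
  | zero =>
    intro l hl
    simp only [paths, Finset.mem_singleton] at hl
    subst hl
    simp [wt]
  | succ n ih =>
    intro l hl
    rcases (mem_paths_succ N).1 hl with ⟨t, ht, y, hy, rfl⟩
    have htne := paths_ne_nil N ht
    rw [Finset.prod_range_succ]
    have hmain : ∏ i ∈ Finset.range n, q ((y :: t).getD (n + 1 - i) x) ((y :: t).getD (n + 1 - i - 1) x)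
        = ∏ i ∈ Finset.range n, q (t.getD (n - i) x) (t.getD (n - i - 1) x) := by
      refine Finset.prod_congr rfl (fun i hi => ?_)
      have hi' : i < n := Finset.mem_range.1 hi
      rw [show n + 1 - i - 1 = (n - i - 1) + 1 by omega, show n + 1 - i = (n - i) + 1 by omega]
      rfl
    rw [hmain, ih ht, show n + 1 - n - 1 = 0 by omega, show n + 1 - n = 1 by omega]
    rw [wt_cons q htne,
      show (y :: t).getD 1 x = t.headI from getD_zero_headI htne x,
      show (y :: t).getD 0 x = y from rfl]

lemma paths_ext {x : V} {n : ℕ} {l l' : List V} (hl : l ∈ paths N x n) (hl' : l' ∈ paths N x n)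
    (hagree : ∀ j ≤ n, l.getD j x = l'.getD j x) : l = l' := by
  have hlen : l.length = l'.length := by rw [paths_length N hl, paths_length N hl']
  refine List.ext_getElem hlen (fun i h1 h2 => ?_)
  have hin : i ≤ n := by
    have := paths_length N hl
    omega
  have := hagree i hin
  rwa [List.getD_eq_getElem l x h1, List.getD_eq_getElem l' x h2] at this

end HProc

/-- Along the `h`-process started at `v ∈ S_h`, `P^h_v(h(Y_ℓ) > M) → 1`
as `ℓ → ∞`, for every `M > 0`. -/
theorem hprocess_tends_to_infinity_in_probability {V : Type*} [MeasurableSpace V]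
    (hms : ∀ s : Set V, MeasurableSet s)
    (N : Network V) (hrec : N.Recurrent) (o : V) (h : V → ℝ)
    (hpot : N.IsPotential o h) (v : V) (hv : 0 < h v)
    (P : MeasureTheory.Measure (ℕ → V)) [MeasureTheory.IsProbabilityMeasure P]
    (hchain : IsChainLaw (fun x => if x = v then 1 else 0) (N.ph h) P)
    (M : ℝ) (hM : 0 < M) :
    Filter.Tendsto (fun ℓ => P {ω | M < h (ω ℓ)}) Filter.atTop (nhds 1) := by
  classical
  haveI : Inhabited V := ⟨v⟩
  have hov : o ≠ v := fun hc => by rw [← hc, hpot.2.1] at hv; exact lt_irrefl 0 hv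
  have hlow : ∀ n : ℕ,
      ENNReal.ofReal (1 - M / h v * HProc.Bq N v o n) ≤ P {ω | M < h (ω n)} := by
    intro n
    set Good := (HProc.paths N v n).filter (fun l => M < h l.headI) with hGoodDef
    set Cyl : List V → Set (ℕ → V) :=
      fun l => {ω | ∀ i ≤ n, ω i = l.getD (n - i) v} with hCylDef
    have hmeas : ∀ l ∈ Good, MeasurableSet (Cyl l) := by
      intro l _
      have : Cyl l = ⋂ (i : ℕ), ⋂ (_ : i ≤ n),
          (fun ω : ℕ → V => ω i) ⁻¹' {l.getD (n - i) v} := by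
        ext ω
        simp [hCylDef, Set.mem_iInter]
      rw [this]
      exact MeasurableSet.iInter (fun i => MeasurableSet.iInter (fun hi =>
        (measurable_pi_apply i) (hms _)))
    have hdisj : (↑Good : Set (List V)).PairwiseDisjoint Cyl := by
      intro l hl l' hl' hne
      refine Set.disjoint_left.2 (fun {ω} hω hω' => hne ?_)
      have hlp : l ∈ HProc.paths N v n := (Finset.mem_filter.1 (Finset.mem_coe.1 hl)).1
      have hlp' : l' ∈ HProc.paths N v n := (Finset.mem_filter.1 (Finset.mem_coe.1 hl')).1
      refine HProc.paths_ext N hlp hlp' (fun j hj => ?_)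
      have h1 := hω (n - j) (by omega)
      have h2 := hω' (n - j) (by omega)
      rw [show n - (n - j) = j by omega] at h1 h2
      rw [← h1, ← h2]
    have hsub : (⋃ l ∈ Good, Cyl l) ⊆ {ω | M < h (ω n)} := by
      intro ω hω
      rcases Set.mem_iUnion₂.1 hω with ⟨l, hlG, hωl⟩
      have hlp : l ∈ HProc.paths N v n := (Finset.mem_filter.1 hlG).1
      have hMl : M < h l.headI := (Finset.mem_filter.1 hlG).2
      have hωn := hωl n le_rfl
      rw [show n - n = 0 by omega] at hωn
      rw [Set.mem_setOf_eq, hωn, HProc.getD_zero_headI (HProc.paths_ne_nil N hlp) v]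
      exact hMl
    have hPC : ∀ l ∈ Good, P (Cyl l) = ENNReal.ofReal (HProc.wt (N.ph h) l) := by
      intro l hlG
      have hlp : l ∈ HProc.paths N v n := (Finset.mem_filter.1 hlG).1
      have hP : P (Cyl l) = ENNReal.ofReal ((if l.getD (n - 0) v = v then (1:ℝ) else 0)
          * ∏ i ∈ Finset.range n, N.ph h (l.getD (n - i) v) (l.getD (n - (i + 1)) v)) :=
        hchain n (fun i => l.getD (n - i) v)
      rw [hP]
      congr 1
      rw [show n - 0 = n from rfl, HProc.getD_last N v hlp, if_pos rfl, one_mul]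
      rw [← HProc.prod_getD N (N.ph h) v hlp]
      rfl
    have hchain2 : P {ω | M < h (ω n)} ≥ ENNReal.ofReal (∑ l ∈ Good, HProc.wt (N.ph h) l) := by
      calc ENNReal.ofReal (∑ l ∈ Good, HProc.wt (N.ph h) l)
          = ∑ l ∈ Good, ENNReal.ofReal (HProc.wt (N.ph h) l) :=
            ENNReal.ofReal_sum_of_nonneg (fun l _ => HProc.wt_ph_nonneg N hpot l)
        _ = ∑ l ∈ Good, P (Cyl l) := (Finset.sum_congr rfl hPC).symm
        _ = P (⋃ l ∈ Good, Cyl l) := (measure_biUnion_finset hdisj hmeas).symm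
        _ ≤ P {ω | M < h (ω n)} := measure_mono hsub
    refine le_trans (ENNReal.ofReal_le_ofReal ?_) hchain2
    rw [hGoodDef, Finset.sum_filter]
    exact HProc.good_sum_lower N hpot hv hM n
  have hB0 : Filter.Tendsto (HProc.Bq N v o) Filter.atTop (nhds 0) :=
    HProc.Bq_tendsto_zero N v o (hrec v) hov
  have hlim : Filter.Tendsto (fun n => ENNReal.ofReal (1 - M / h v * HProc.Bq N v o n))
      Filter.atTop (nhds 1) := by
    have h1 : Filter.Tendsto (fun n => 1 - M / h v * HProc.Bq N v o n) Filter.atTop (nhds 1) := by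
      have h2 := hB0.const_mul (M / h v)
      have h3 := (tendsto_const_nhds (x := (1:ℝ)) (f := Filter.atTop (α := ℕ))).sub h2
      simpa using h3
    have := (ENNReal.continuous_ofReal.tendsto 1).comp h1
    simpa [Function.comp_def] using this
  refine tendsto_of_tendsto_of_tendsto_of_le_of_le hlim tendsto_const_nhds
    (fun n => hlow n) (fun n => ?_)
  exact (measure_mono (Set.subset_univ _)).trans_eq measure_univ
end
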